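/- arXiv:gr-qc/0606044 — 14 statements merged into one kernel-verified Lean document; each statement's English description precedes it below -/
import Mathlib

section
/- Let G be a real symmetric 4×4 matrix whose diagonal entries are all zero. Then det G = x² + y² + z² − 2xy − 2xz − 2yz, where x = G₂₃G₁₄, y = G₁₃G₂₄ and z = G₁₂G₃₄. In particular, if moreover all off-diagonal entries of G are positive and A = √(G₂₃G₁₄), B = √(G₁₃G₂₄), C = √(G₁₂G₃₄), then det G = (A+B+C)(A−B−C)(B−A−C)(C−A−B) = −(A+B+C)(−A+B+C)(A−B+C)(A+B−C). -/
/-- For a real symmetric 4×4 matrix `G` with zero diagonal,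
`det G = x² + y² + z² − 2xy − 2xz − 2yz` where `x = G₂₃G₁₄`, `y = G₁₃G₂₄`,
`z = G₁₂G₃₄`; and if moreover all off-diagonal entries are positive, then with
`A = √x`, `B = √y`, `C = √z` one has
`det G = (A+B+C)(A−B−C)(B−A−C)(C−A−B) = −(A+B+C)(−A+B+C)(A−B+C)(A+B−C)`. -/
theorem stmt_0 (G : Matrix (Fin 4) (Fin 4) ℝ)
    (hsymm : G.IsSymm) (hdiag : ∀ i, G i i = 0) :
    G.det =
      (G 1 2 * G 0 3) ^ 2 + (G 0 2 * G 1 3) ^ 2 + (G 0 1 * G 2 3) ^ 2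
        - 2 * (G 1 2 * G 0 3) * (G 0 2 * G 1 3)
        - 2 * (G 1 2 * G 0 3) * (G 0 1 * G 2 3)
        - 2 * (G 0 2 * G 1 3) * (G 0 1 * G 2 3)
    ∧ ((∀ i j, i ≠ j → 0 < G i j) →
        G.det =
          (Real.sqrt (G 1 2 * G 0 3) + Real.sqrt (G 0 2 * G 1 3) + Real.sqrt (G 0 1 * G 2 3))
          * (Real.sqrt (G 1 2 * G 0 3) - Real.sqrt (G 0 2 * G 1 3) - Real.sqrt (G 0 1 * G 2 3))
          * (Real.sqrt (G 0 2 * G 1 3) - Real.sqrt (G 1 2 * G 0 3) - Real.sqrt (G 0 1 * G 2 3))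
          * (Real.sqrt (G 0 1 * G 2 3) - Real.sqrt (G 1 2 * G 0 3) - Real.sqrt (G 0 2 * G 1 3))
        ∧ G.det =
          -((Real.sqrt (G 1 2 * G 0 3) + Real.sqrt (G 0 2 * G 1 3) + Real.sqrt (G 0 1 * G 2 3))
          * (-Real.sqrt (G 1 2 * G 0 3) + Real.sqrt (G 0 2 * G 1 3) + Real.sqrt (G 0 1 * G 2 3))
          * (Real.sqrt (G 1 2 * G 0 3) - Real.sqrt (G 0 2 * G 1 3) + Real.sqrt (G 0 1 * G 2 3))
          * (Real.sqrt (G 1 2 * G 0 3) + Real.sqrt (G 0 2 * G 1 3) - Real.sqrt (G 0 1 * G 2 3)))) := by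
  have hs : ∀ i j, G j i = G i j := fun i j => hsymm.apply i j
  have hdet : G.det =
      (G 1 2 * G 0 3) ^ 2 + (G 0 2 * G 1 3) ^ 2 + (G 0 1 * G 2 3) ^ 2
        - 2 * (G 1 2 * G 0 3) * (G 0 2 * G 1 3)
        - 2 * (G 1 2 * G 0 3) * (G 0 1 * G 2 3)
        - 2 * (G 0 2 * G 1 3) * (G 0 1 * G 2 3) := by
    rw [Matrix.det_succ_row_zero]
    simp only [Fin.sum_univ_succ, Fin.sum_univ_zero, Matrix.det_fin_three, Matrix.submatrix_apply, Fin.succAbove]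
    norm_num [Fin.lt_def]
    simp only [show (Fin.succ 2 : Fin 4) = 3 from rfl, show (Fin.castSucc 2 : Fin 4) = 2 from rfl]
    simp only [hdiag, hs 0 1, hs 0 2, hs 0 3, hs 1 2, hs 1 3, hs 2 3]
    ring
  refine ⟨hdet, fun hpos => ?_⟩
  have hx : (0:ℝ) ≤ G 1 2 * G 0 3 :=
    le_of_lt (mul_pos (hpos 1 2 (by decide)) (hpos 0 3 (by decide)))
  have hy : (0:ℝ) ≤ G 0 2 * G 1 3 :=
    le_of_lt (mul_pos (hpos 0 2 (by decide)) (hpos 1 3 (by decide)))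
  have hz : (0:ℝ) ≤ G 0 1 * G 2 3 :=
    le_of_lt (mul_pos (hpos 0 1 (by decide)) (hpos 2 3 (by decide)))
  have ha := Real.sq_sqrt hx
  have hb := Real.sq_sqrt hy
  have hc := Real.sq_sqrt hz
  constructor <;> rw [hdet] <;> nlinarith [ha, hb, hc]
end

section
/- Let G be a real symmetric 4×4 matrix in emission form, and let A = √(G₂₃G₁₄), B = √(G₁₃G₂₄), C = √(G₁₂G₃₄). Then det G < 0 if and only if A, B, C satisfy the strict triangle inequalities A < B + C, B < A + C and C < A + B. -/
/-!
Expanding the determinant of a symmetric matrix with zero diagonal gives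
`det G = A⁴ + B⁴ + C⁴ - 2(A²B² + B²C² + C²A²) = -(A+B+C)(-A+B+C)(A-B+C)(A+B-C)`,
minus Heron's product (sixteen times the squared area of a triangle with sides `A, B, C`).
For nonnegative `A, B, C` at most one of the last three factors can be nonpositive, so the
product is positive exactly when all of them are, i.e. when the strict triangle inequalities hold.
-/

theorem Matrix.det_fin_four_of_isSymm_of_diag_eq_zero {R : Type*} [CommRing R]
    {G : Matrix (Fin 4) (Fin 4) R} (hsymm : G.IsSymm) (hdiag : ∀ i, G i i = 0) :
    G.det = (G 1 2 * G 0 3) ^ 2 + (G 0 2 * G 1 3) ^ 2 + (G 0 1 * G 2 3) ^ 2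
      - 2 * (G 1 2 * G 0 3 * (G 0 2 * G 1 3) + G 0 2 * G 1 3 * (G 0 1 * G 2 3)
        + G 0 1 * G 2 3 * (G 1 2 * G 0 3)) := by
  have hsym (i j : Fin 4) : G j i = G i j := hsymm.apply i j
  rw [Matrix.det_succ_row_zero]
  simp [Fin.sum_univ_succ, Matrix.det_fin_three, Fin.succAbove, Matrix.submatrix_apply, hdiag,
    hsym 1 0, hsym 2 0, hsym 3 0, hsym 2 1, hsym 3 1, hsym 3 2]
  ring

section TriangleProduct

variable {R : Type*} [CommRing R] [LinearOrder R] [IsStrictOrderedRing R] {A B C : R}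

theorem lt_add_of_triangle_product_pos (hB : 0 ≤ B) (hC : 0 ≤ C)
    (h : 0 < (A + B + C) * (-A + B + C) * (A - B + C) * (A + B - C)) : A < B + C := by
  by_contra! hle
  have hrest : 0 ≤ (A + B + C) * (A - B + C) * (A + B - C) :=
    mul_nonneg (mul_nonneg (by linarith) (by linarith)) (by linarith)
  have hprod : (A + B + C) * (-A + B + C) * (A - B + C) * (A + B - C)
      = (-A + B + C) * ((A + B + C) * (A - B + C) * (A + B - C)) := by ring
  exact h.not_ge (hprod ▸ mul_nonpos_of_nonpos_of_nonneg (by linarith) hrest)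

theorem triangle_product_pos_iff (hA : 0 ≤ A) (hB : 0 ≤ B) (hC : 0 ≤ C) :
    0 < (A + B + C) * (-A + B + C) * (A - B + C) * (A + B - C) ↔
      A < B + C ∧ B < A + C ∧ C < A + B := by
  constructor
  · intro h
    refine ⟨lt_add_of_triangle_product_pos hB hC h,
      lt_add_of_triangle_product_pos hA hC ?_, lt_add_of_triangle_product_pos hA hB ?_⟩ <;>
      linarith
  · rintro ⟨hBC, hAC, hAB⟩
    have : 0 < -A + B + C := by linarith
    have : 0 < A - B + C := by linarith
    have : 0 < A + B - C := by linarith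
    have : 0 < A + B + C := by linarith
    positivity

end TriangleProduct

/-- For a real symmetric 4×4 matrix `G` in emission form (zero diagonal,
positive off-diagonal entries), with `A = √(G₂₃G₁₄)`, `B = √(G₁₃G₂₄)`, `C = √(G₁₂G₃₄)`,
one has `det G < 0` iff `A, B, C` satisfy the strict triangle inequalities. -/
theorem stmt_1 (G : Matrix (Fin 4) (Fin 4) ℝ)
    (hsymm : G.IsSymm) (hdiag : ∀ i, G i i = 0)
    (hpos : ∀ i j, i ≠ j → 0 < G i j) :
    G.det < 0 ↔
      Real.sqrt (G 1 2 * G 0 3) < Real.sqrt (G 0 2 * G 1 3) + Real.sqrt (G 0 1 * G 2 3)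
      ∧ Real.sqrt (G 0 2 * G 1 3) < Real.sqrt (G 1 2 * G 0 3) + Real.sqrt (G 0 1 * G 2 3)
      ∧ Real.sqrt (G 0 1 * G 2 3) < Real.sqrt (G 1 2 * G 0 3) + Real.sqrt (G 0 2 * G 1 3) := by
  have hprod_nonneg (i j k l : Fin 4) (hij : i ≠ j) (hkl : k ≠ l) : 0 ≤ G i j * G k l :=
    (mul_pos (hpos i j hij) (hpos k l hkl)).le
  have hA := Real.sq_sqrt (hprod_nonneg 1 2 0 3 (by decide) (by decide))
  have hB := Real.sq_sqrt (hprod_nonneg 0 2 1 3 (by decide) (by decide))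
  have hC := Real.sq_sqrt (hprod_nonneg 0 1 2 3 (by decide) (by decide))
  set A := Real.sqrt (G 1 2 * G 0 3)
  set B := Real.sqrt (G 0 2 * G 1 3)
  set C := Real.sqrt (G 0 1 * G 2 3)
  have hdet : G.det = -((A + B + C) * (-A + B + C) * (A - B + C) * (A + B - C)) := by
    rw [Matrix.det_fin_four_of_isSymm_of_diag_eq_zero hsymm hdiag, ← hA, ← hB, ← hC]
    ring
  rw [hdet, neg_lt_zero]
  exact triangle_product_pos_iff (Real.sqrt_nonneg _) (Real.sqrt_nonneg _) (Real.sqrt_nonneg _)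
end

section
/- Let G be a real symmetric 4×4 matrix in emission form, and let A = √(G₂₃G₁₄), B = √(G₁₃G₂₄), C = √(G₁₂G₃₄). Then there exists an invertible real 4×4 matrix P with Pᵀ G P = diag(1, −1, −1, −1) (i.e., G is congruent to the Lorentzian metric of signature (+,−,−,−)) if and only if A < B + C, B < A + C and C < A + B. -/
/-!
Expanding the determinant gives `det G = -(A + B + C)(B + C - A)(A + C - B)(A + B - C)`, so the
triangle inequalities say exactly that `det G < 0`, and congruence preserves the sign of the
determinant. Conversely, if `det G < 0`, the eigenvalues `λ₁ ≥ λ₂ ≥ λ₃ ≥ λ₄` of `G` are nonzero,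
sum to `trace G = 0` and have negative product, so their signs are `(+,-,-,-)` or `(+,+,+,-)`.
The second pattern would force `-λ₄ = λ₁ + λ₂ + λ₃ > λ₁`, but for a matrix with nonnegative
entries `-λ₄ = -vᵀGv ≤ |v|ᵀG|v| ≤ λ₁` for a unit eigenvector `v` of `λ₄`. Rescaling an orthonormal
eigenbasis then gives the congruence with `diag(1, -1, -1, -1)`.
-/

open Matrix

theorem pos_of_mul_pos_of_add_nonneg {p q r : ℝ} (hpq : 0 ≤ p + q) (hpr : 0 ≤ p + r)
    (h : 0 < p * q * r) : 0 < p := by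
  by_contra! hp
  nlinarith [mul_nonneg (mul_nonneg (neg_nonneg.mpr hp) (by linarith : 0 ≤ q))
    (by linarith : 0 ≤ r)]

theorem triangle_iff_heron_neg {a b c : ℝ} (ha : 0 ≤ a) (hb : 0 ≤ b) (hc : 0 ≤ c) :
    (a < b + c ∧ b < a + c ∧ c < a + b) ↔
      (a ^ 2) ^ 2 + (b ^ 2) ^ 2 + (c ^ 2) ^ 2
        - 2 * (a ^ 2 * b ^ 2 + b ^ 2 * c ^ 2 + c ^ 2 * a ^ 2) < 0 := by
  have heron : (a ^ 2) ^ 2 + (b ^ 2) ^ 2 + (c ^ 2) ^ 2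
      - 2 * (a ^ 2 * b ^ 2 + b ^ 2 * c ^ 2 + c ^ 2 * a ^ 2) =
      -((a + b + c) * ((b + c - a) * (a + c - b) * (a + b - c))) := by ring
  rw [heron, neg_lt_zero]
  constructor
  · rintro ⟨h₁, h₂, h₃⟩
    have := mul_pos (mul_pos (sub_pos.mpr h₁) (sub_pos.mpr h₂)) (sub_pos.mpr h₃)
    exact mul_pos (by linarith) this
  · intro h
    have hprod : 0 < (b + c - a) * (a + c - b) * (a + b - c) :=
      pos_of_mul_pos_right h (by positivity)
    have h₁ := pos_of_mul_pos_of_add_nonneg (by linarith) (by linarith) hprod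
    have h₂ := pos_of_mul_pos_of_add_nonneg (p := a + c - b) (q := b + c - a) (r := a + b - c)
      (by linarith) (by linarith) (by convert hprod using 1; ring)
    have h₃ := pos_of_mul_pos_of_add_nonneg (p := a + b - c) (q := b + c - a) (r := a + c - b)
      (by linarith) (by linarith) (by convert hprod using 1; ring)
    exact ⟨by linarith, by linarith, by linarith⟩

theorem pos_and_neg_of_le_of_sum_eq_zero {p q r s : ℝ} (hqp : q ≤ p) (hrq : r ≤ q)
    (hsr : s ≤ r) (hsum : p + q + r + s = 0) (hprod : p * q * r * s < 0) (hsp : -s ≤ p) :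
    0 < p ∧ q < 0 := by
  suffices hq : q < 0 by exact ⟨by linarith, hq⟩
  by_contra! hq
  rcases le_or_gt 0 r with hr | hr
  · obtain rfl : q = 0 := by linarith
    simp at hprod
  · nlinarith [mul_nonneg (mul_nonneg (hq.trans hqp) hq)
      (mul_nonneg_of_nonpos_of_nonpos (hsr.trans hr.le) hr.le)]

namespace Matrix

theorem neg_dotProduct_mulVec_le_abs {n : Type*} [Fintype n] {B : Matrix n n ℝ}
    (hB : ∀ i j, 0 ≤ B i j) (v : n → ℝ) : -(v ⬝ᵥ (B *ᵥ v)) ≤ |v| ⬝ᵥ (B *ᵥ |v|) := by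
  simp only [dotProduct, mulVec, Finset.mul_sum, ← Finset.sum_neg_distrib, Pi.abs_apply]
  gcongr with i _ j _
  calc -(v i * (B i j * v j)) ≤ |v i * (B i j * v j)| := neg_le_abs _
    _ = |v i| * (B i j * |v j|) := by rw [abs_mul, abs_mul, abs_of_nonneg (hB i j)]

variable {n K : Type*} [Fintype n] [DecidableEq n]

def IsCongruent [CommRing K] (G D : Matrix n n K) : Prop :=
  ∃ P : Matrix n n K, IsUnit P ∧ Pᵀ * G * P = D

namespace IsCongruent

variable [CommRing K] {G D E : Matrix n n K}

theorem trans (h₁ : IsCongruent G D) (h₂ : IsCongruent D E) : IsCongruent G E := by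
  obtain ⟨P, hP, rfl⟩ := h₁
  obtain ⟨Q, hQ, rfl⟩ := h₂
  exact ⟨P * Q, hP.mul hQ, by simp only [transpose_mul, Matrix.mul_assoc]⟩

theorem det_neg [LinearOrder K] [IsStrictOrderedRing K] (h : IsCongruent G D) (hD : D.det < 0) :
    G.det < 0 := by
  obtain ⟨P, -, rfl⟩ := h
  rw [det_mul, det_mul, det_transpose] at hD
  nlinarith [sq_nonneg P.det]

end IsCongruent

theorem isCongruent_diagonal_comp_perm [CommRing K] (d : n → K) (σ : Equiv.Perm n) :
    IsCongruent (diagonal d) (diagonal (d ∘ σ)) := by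
  refine ⟨(σ⁻¹).permMatrix K, ?_, ?_⟩
  · rw [isUnit_iff_isUnit_det, det_permutation]
    exact (Units.isUnit _).map (Int.castRingHom K)
  · rw [transpose_permMatrix, inv_inv, PEquiv.toMatrix_toPEquiv_mul,
      PEquiv.mul_toMatrix_toPEquiv]
    simp [Equiv.Perm.inv_def]

theorem isCongruent_diagonal_mul_sq [Field K] (d s : n → K) (hs : ∀ i, s i ≠ 0) :
    IsCongruent (diagonal d) (diagonal fun i => s i ^ 2 * d i) := by
  refine ⟨diagonal s, ?_, ?_⟩
  · rw [isUnit_iff_isUnit_det, det_diagonal]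
    exact (Finset.prod_ne_zero_iff.mpr fun i _ => hs i).isUnit
  · rw [diagonal_transpose, diagonal_mul_diagonal, diagonal_mul_diagonal]
    congr 1; ext i; ring

theorem isCongruent_diagonal_div_abs {d : n → ℝ} (hd : ∀ i, d i ≠ 0) :
    IsCongruent (diagonal d) (diagonal fun i => d i / |d i|) := by
  have hs : ∀ i, (√|d i|)⁻¹ ≠ 0 := fun i =>
    inv_ne_zero (Real.sqrt_ne_zero'.mpr (abs_pos.mpr (hd i)))
  have hsq : (fun i => (√|d i|)⁻¹ ^ 2 * d i) = fun i => d i / |d i| := by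
    ext i; rw [inv_pow, Real.sq_sqrt (abs_nonneg _), inv_mul_eq_div]
  exact hsq ▸ isCongruent_diagonal_mul_sq d _ hs

namespace IsHermitian

variable {A : Matrix n n ℝ} (hA : A.IsHermitian)

theorem eq_eigenvectorUnitary_mul_diagonal_mul_transpose :
    A = (hA.eigenvectorUnitary : Matrix n n ℝ) * diagonal hA.eigenvalues *
      (hA.eigenvectorUnitary : Matrix n n ℝ)ᵀ := by
  conv_lhs => rw [hA.spectral_theorem]
  simp [Unitary.conjStarAlgAut_apply, star_eq_conjTranspose, RCLike.ofReal_real_eq_id]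

theorem isCongruent_diagonal_eigenvalues : IsCongruent A (diagonal hA.eigenvalues) := by
  refine ⟨hA.eigenvectorUnitary, (Unitary.toUnits hA.eigenvectorUnitary).isUnit, ?_⟩
  simpa [Unitary.conjStarAlgAut_star_apply, star_eq_conjTranspose, RCLike.ofReal_real_eq_id]
    using hA.conjStarAlgAut_star_eigenvectorUnitary

theorem dotProduct_mulVec_le {c : ℝ} (hc : ∀ i, hA.eigenvalues i ≤ c) (w : n → ℝ) :
    w ⬝ᵥ (A *ᵥ w) ≤ c * (w ⬝ᵥ w) := by
  set U : Matrix n n ℝ := (hA.eigenvectorUnitary : Matrix n n ℝ)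
  have hUU : U * Uᵀ = 1 := by
    simpa [star_eq_conjTranspose] using (mem_unitaryGroup_iff.mp hA.eigenvectorUnitary.2)
  have hpsd : (U * diagonal (fun i => c - hA.eigenvalues i) * Uᴴ).PosSemidef :=
    (PosSemidef.diagonal fun i => sub_nonneg.mpr (hc i)).mul_mul_conjTranspose_same U
  have hdiag : diagonal (fun i => c - hA.eigenvalues i) = c • 1 - diagonal hA.eigenvalues := by
    ext i j; rcases eq_or_ne i j with rfl | h <;> simp [*]
  have heq : U * diagonal (fun i => c - hA.eigenvalues i) * Uᴴ = c • 1 - A := by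
    conv_rhs => rw [hA.eq_eigenvectorUnitary_mul_diagonal_mul_transpose]
    rw [conjTranspose_eq_transpose_of_trivial, hdiag, mul_sub, sub_mul, mul_smul_comm, mul_one,
      smul_mul_assoc, hUU]
  have hquad := (heq ▸ hpsd).dotProduct_mulVec_nonneg w
  simpa only [star_trivial, sub_mulVec, smul_mulVec, one_mulVec, dotProduct_sub, dotProduct_smul,
    smul_eq_mul, sub_nonneg] using hquad

theorem neg_eigenvalues_le_of_nonneg (hnonneg : ∀ i j, 0 ≤ A i j) {c : ℝ}
    (hc : ∀ j, hA.eigenvalues j ≤ c) (i : n) : -hA.eigenvalues i ≤ c := by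
  set v : n → ℝ := ⇑(hA.eigenvectorBasis i)
  have hvv : v ⬝ᵥ v = 1 := by
    have := real_inner_self_eq_norm_sq (hA.eigenvectorBasis i)
    rw [hA.eigenvectorBasis.orthonormal.1 i, EuclideanSpace.inner_eq_star_dotProduct] at this
    simpa using this
  have hvAv : v ⬝ᵥ (A *ᵥ v) = hA.eigenvalues i := by
    rw [hA.mulVec_eigenvectorBasis, dotProduct_smul, hvv, smul_eq_mul, mul_one]
  have habs : |v| ⬝ᵥ |v| = 1 := by
    simpa [dotProduct, ← abs_mul] using hvv
  calc -hA.eigenvalues i ≤ |v| ⬝ᵥ (A *ᵥ |v|) := hvAv ▸ neg_dotProduct_mulVec_le_abs hnonneg v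
    _ ≤ c * (|v| ⬝ᵥ |v|) := hA.dotProduct_mulVec_le hc |v|
    _ = c := by rw [habs, mul_one]

end IsHermitian

theorem det_fin_four_of_isSymm_of_diag_eq_zero_s2 {R : Type*} [CommRing R]
    {G : Matrix (Fin 4) (Fin 4) R} (hsymm : G.IsSymm) (hdiag : ∀ i, G i i = 0) :
    G.det = (G 1 2 * G 0 3) ^ 2 + (G 0 2 * G 1 3) ^ 2 + (G 0 1 * G 2 3) ^ 2
      - 2 * (G 1 2 * G 0 3 * (G 0 2 * G 1 3) + G 0 2 * G 1 3 * (G 0 1 * G 2 3)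
        + G 0 1 * G 2 3 * (G 1 2 * G 0 3)) := by
  have h : ∀ i j, G j i = G i j := fun i j => hsymm.apply i j
  simp only [det_succ_row_zero, submatrix_apply, submatrix_submatrix, Function.comp_apply,
    det_unique, Fin.default_eq_zero, Fin.sum_univ_succ, Finset.univ_unique, Finset.sum_singleton,
    Fin.zero_succAbove, Fin.succ_succAbove_one, Fin.succAbove_ne_zero_zero, Fin.succ_zero_eq_one,
    Fin.succ_one_eq_two, Fin.reduceSucc, Fin.val_succ, Fin.val_eq_zero, Fin.isValue,
    Fin.coe_ofNat_eq_mod, Nat.zero_mod, pow_zero, pow_one, one_mul, zero_add, ne_eq,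
    Fin.succ_ne_zero, not_false_eq_true,
    show Fin.succAbove (1 : Fin 4) 2 = 3 from rfl, show Fin.succAbove (2 : Fin 4) 2 = 3 from rfl,
    show Fin.succAbove (3 : Fin 4) 2 = 2 from rfl, hdiag, h 1 0, h 2 0, h 3 0, h 2 1, h 3 1, h 3 2]
  ring

theorem det_fin_four_neg_iff_triangle {G : Matrix (Fin 4) (Fin 4) ℝ} (hsymm : G.IsSymm)
    (hdiag : ∀ i, G i i = 0) (hnonneg : ∀ i j, 0 ≤ G i j) :
    G.det < 0 ↔
      √(G 1 2 * G 0 3) < √(G 0 2 * G 1 3) + √(G 0 1 * G 2 3)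
      ∧ √(G 0 2 * G 1 3) < √(G 1 2 * G 0 3) + √(G 0 1 * G 2 3)
      ∧ √(G 0 1 * G 2 3) < √(G 1 2 * G 0 3) + √(G 0 2 * G 1 3) := by
  have hsq : ∀ i j k l, √(G i j * G k l) ^ 2 = G i j * G k l := fun i j k l =>
    Real.sq_sqrt (mul_nonneg (hnonneg i j) (hnonneg k l))
  rw [triangle_iff_heron_neg (Real.sqrt_nonneg _) (Real.sqrt_nonneg _) (Real.sqrt_nonneg _),
    hsq, hsq, hsq, det_fin_four_of_isSymm_of_diag_eq_zero_s2 hsymm hdiag]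

theorem isCongruent_lorentzian_of_det_neg {G : Matrix (Fin 4) (Fin 4) ℝ} (hsymm : G.IsSymm)
    (hnonneg : ∀ i j, 0 ≤ G i j) (htrace : G.trace = 0) (hdet : G.det < 0) :
    IsCongruent G (diagonal ![1, -1, -1, -1]) := by
  have hH : G.IsHermitian := isHermitian_iff_isSymm.mpr hsymm
  set μ := hH.eigenvalues
  set σ := Tuple.sort (-μ)
  set l := μ ∘ σ
  have hanti : Antitone l := fun i j hij => neg_le_neg_iff.mp (Tuple.monotone_sort (-μ) hij)
  have hsum : l 0 + l 1 + l 2 + l 3 = 0 := by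
    have := hH.trace_eq_sum_eigenvalues
    rw [htrace, ← Equiv.sum_comp σ] at this
    simpa [Fin.sum_univ_four, l, eq_comm] using this
  have hprod : l 0 * l 1 * l 2 * l 3 < 0 := by
    have := hH.det_eq_prod_eigenvalues
    rw [← Equiv.prod_comp σ] at this
    simpa [Fin.prod_univ_four, l, this] using hdet
  have hmax : ∀ j, μ j ≤ l 0 := fun j => by
    simpa [l] using hanti (Fin.zero_le (σ.symm j))
  obtain ⟨h0, h1⟩ := pos_and_neg_of_le_of_sum_eq_zero (hanti (by decide))
    (hanti (by decide)) (hanti (by decide)) hsum hprod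
    (hH.neg_eigenvalues_le_of_nonneg hnonneg hmax (σ 3))
  have h2 : l 2 < 0 := (hanti (by decide)).trans_lt h1
  have h3 : l 3 < 0 := (hanti (by decide)).trans_lt h2
  have hsigns : (fun i => l i / |l i|) = ![1, -1, -1, -1] := by
    funext i
    fin_cases i <;> simp [abs_of_pos, abs_of_neg, h0, h1, h2, h3, h0.ne', h1.ne, h2.ne, h3.ne]
  have hl : ∀ i, l i ≠ 0 := by
    intro i; fin_cases i
    exacts [h0.ne', h1.ne, h2.ne, h3.ne]
  exact (hH.isCongruent_diagonal_eigenvalues.trans (isCongruent_diagonal_comp_perm μ σ)).trans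
    (hsigns ▸ isCongruent_diagonal_div_abs hl)

end Matrix

/-- A real symmetric 4×4 matrix `G` in emission form is congruent to the
Lorentzian metric `diag(1,−1,−1,−1)` (via an invertible matrix `P`, `Pᵀ G P = diag(1,−1,−1,−1)`)
iff `A = √(G₂₃G₁₄)`, `B = √(G₁₃G₂₄)`, `C = √(G₁₂G₃₄)` satisfy the strict triangle
inequalities. -/
theorem stmt_2 (G : Matrix (Fin 4) (Fin 4) ℝ)
    (hsymm : G.IsSymm) (hdiag : ∀ i, G i i = 0)
    (hpos : ∀ i j, i ≠ j → 0 < G i j) :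
    (∃ P : Matrix (Fin 4) (Fin 4) ℝ, IsUnit P ∧
        P.transpose * G * P = Matrix.diagonal ![1, -1, -1, -1]) ↔
      Real.sqrt (G 1 2 * G 0 3) < Real.sqrt (G 0 2 * G 1 3) + Real.sqrt (G 0 1 * G 2 3)
      ∧ Real.sqrt (G 0 2 * G 1 3) < Real.sqrt (G 1 2 * G 0 3) + Real.sqrt (G 0 1 * G 2 3)
      ∧ Real.sqrt (G 0 1 * G 2 3) < Real.sqrt (G 1 2 * G 0 3) + Real.sqrt (G 0 2 * G 1 3) := by
  have hnonneg : ∀ i j, 0 ≤ G i j := fun i j => by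
    rcases eq_or_ne i j with rfl | hij
    exacts [(hdiag i).ge, (hpos i j hij).le]
  have htrace : G.trace = 0 := by simp [trace, hdiag]
  rw [← det_fin_four_neg_iff_triangle hsymm hdiag hnonneg]
  constructor
  · intro hcongr
    exact IsCongruent.det_neg hcongr (by simp [det_diagonal, Fin.prod_univ_four])
  · exact isCongruent_lorentzian_of_det_neg hsymm hnonneg htrace
end

section
/- Let u, v, w be three nonzero vectors of ℝ⁴ which are null for the Minkowski form η, i.e. η(u,u) = η(v,v) = η(w,w) = 0. Then the set {u, v, w} is linearly dependent over ℝ if and only if two of the three vectors are proportional (scalar multiples of each other). In particular, three pairwise non-proportional null vectors are linearly independent. -/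
/-- The Minkowski form of signature (+,−,−,−) on ℝ⁴. -/
def minkowski (u v : Fin 4 → ℝ) : ℝ :=
  u 0 * v 0 - u 1 * v 1 - u 2 * v 2 - u 3 * v 3

/-!
If `w ≠ 0` and `v, w` are not proportional, then `u, v, w` are dependent exactly when
`u = α v + β w`. For null vectors `η(u, u) = 2αβ η(v, w)`, so either `α β = 0` (and `u` is a
multiple of `w` or `v`) or `v, w` are orthogonal. Two orthogonal null vectors are proportional:
`z = y₀ x - x₀ y` is then a null vector with vanishing time component, hence `z = 0`.
-/

lemma not_linearIndependent_three_iff {K V : Type*} [Field K] [AddCommGroup V] [Module K V]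
    {u v w : V} (hw : w ≠ 0) :
    ¬ LinearIndependent K ![u, v, w] ↔ (∃ c : K, v = c • w) ∨ u ∈ Submodule.span K {v, w} := by
  rw [Matrix.vecCons, linearIndependent_finCons, linearIndependent_fin2,
    Matrix.range_cons_cons_empty]
  simp [hw, eq_comm, or_iff_not_imp_left]

lemma minkowski_add_smul_self (a b : ℝ) (x y : Fin 4 → ℝ) :
    minkowski (a • x + b • y) (a • x + b • y) =
      a ^ 2 * minkowski x x + 2 * a * b * minkowski x y + b ^ 2 * minkowski y y := by
  simp only [minkowski, Pi.add_apply, Pi.smul_apply, smul_eq_mul]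
  ring

lemma minkowski_comm (x y : Fin 4 → ℝ) : minkowski x y = minkowski y x := by
  simp only [minkowski]
  ring

lemma eq_zero_of_minkowski_self_eq_zero {z : Fin 4 → ℝ} (h0 : z 0 = 0)
    (hz : minkowski z z = 0) : z = 0 := by
  simp only [minkowski, h0] at hz
  have h1 : z 1 = 0 := by nlinarith [sq_nonneg (z 1), sq_nonneg (z 2), sq_nonneg (z 3)]
  have h2 : z 2 = 0 := by nlinarith [sq_nonneg (z 1), sq_nonneg (z 2), sq_nonneg (z 3)]
  have h3 : z 3 = 0 := by nlinarith [sq_nonneg (z 1), sq_nonneg (z 2), sq_nonneg (z 3)]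
  funext i
  fin_cases i <;> assumption

lemma exists_eq_smul_of_minkowski_eq_zero {x y : Fin 4 → ℝ} (hx : x ≠ 0)
    (hxx : minkowski x x = 0) (hyy : minkowski y y = 0) (hxy : minkowski x y = 0) :
    ∃ c : ℝ, y = c • x := by
  have hx0 : x 0 ≠ 0 := fun h ↦ hx (eq_zero_of_minkowski_self_eq_zero h hxx)
  have hz : y 0 • x + (-x 0) • y = 0 := by
    refine eq_zero_of_minkowski_self_eq_zero ?_ ?_
    · simp only [Pi.add_apply, Pi.smul_apply, smul_eq_mul]
      ring
    · rw [minkowski_add_smul_self, hxx, hyy, hxy]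
      ring
  refine ⟨(x 0)⁻¹ * y 0, ?_⟩
  rw [neg_smul, add_neg_eq_zero] at hz
  rw [mul_smul, hz, inv_smul_smul₀ hx0]

lemma exists_eq_smul_of_mem_span_pair {u v w : Fin 4 → ℝ} (hw : w ≠ 0)
    (huu : minkowski u u = 0) (hvv : minkowski v v = 0) (hww : minkowski w w = 0)
    (hu : u ∈ Submodule.span ℝ {v, w}) :
    (∃ c : ℝ, u = c • v) ∨ (∃ c : ℝ, u = c • w) ∨ (∃ c : ℝ, v = c • w) := by
  obtain ⟨α, β, rfl⟩ := Submodule.mem_span_pair.mp hu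
  have hαβ : α * β * minkowski v w = 0 := by
    rw [minkowski_add_smul_self, hvv, hww] at huu
    linear_combination huu / 2
  rcases mul_eq_zero.mp hαβ with hαβ | hvw
  · rcases mul_eq_zero.mp hαβ with rfl | rfl
    · exact Or.inr (Or.inl ⟨β, by simp⟩)
    · exact Or.inl ⟨α, by simp⟩
  · rw [minkowski_comm] at hvw
    exact Or.inr (Or.inr (exists_eq_smul_of_minkowski_eq_zero hw hww hvv hvw))

theorem stmt_4_general (u v w : Fin 4 → ℝ)
    (hw : w ≠ 0)
    (huu : minkowski u u = 0) (hvv : minkowski v v = 0) (hww : minkowski w w = 0) :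
    (¬ LinearIndependent ℝ ![u, v, w] ↔
      (∃ c : ℝ, u = c • v) ∨ (∃ c : ℝ, u = c • w) ∨ (∃ c : ℝ, v = c • w))
    ∧ (((∀ c : ℝ, u ≠ c • v) ∧ (∀ c : ℝ, u ≠ c • w) ∧ (∀ c : ℝ, v ≠ c • w)) →
        LinearIndependent ℝ ![u, v, w]) := by
  have main : ¬ LinearIndependent ℝ ![u, v, w] ↔
      (∃ c : ℝ, u = c • v) ∨ (∃ c : ℝ, u = c • w) ∨ (∃ c : ℝ, v = c • w) := by
    rw [not_linearIndependent_three_iff hw]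
    constructor
    · rintro (hvw | hu)
      · exact Or.inr (Or.inr hvw)
      · exact exists_eq_smul_of_mem_span_pair hw huu hvv hww hu
    · rintro (⟨c, rfl⟩ | ⟨c, rfl⟩ | hvw)
      · exact Or.inr (Submodule.smul_mem _ c (Submodule.subset_span (by simp)))
      · exact Or.inr (Submodule.smul_mem _ c (Submodule.subset_span (by simp)))
      · exact Or.inl hvw
  refine ⟨main, fun ⟨huv, huw, hvw⟩ ↦ ?_⟩
  by_contra h
  rcases main.mp h with ⟨c, hc⟩ | ⟨c, hc⟩ | ⟨c, hc⟩
  exacts [huv c hc, huw c hc, hvw c hc]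

/-- Three nonzero null vectors of Minkowski space ℝ⁴ are linearly dependent
iff two of them are proportional; in particular three pairwise non-proportional null
vectors are linearly independent. -/
theorem stmt_4 (u v w : Fin 4 → ℝ)
    (hu : u ≠ 0) (hv : v ≠ 0) (hw : w ≠ 0)
    (huu : minkowski u u = 0) (hvv : minkowski v v = 0) (hww : minkowski w w = 0) :
    (¬ LinearIndependent ℝ ![u, v, w] ↔
      (∃ c : ℝ, u = c • v) ∨ (∃ c : ℝ, u = c • w) ∨ (∃ c : ℝ, v = c • w))
    ∧ (((∀ c : ℝ, u ≠ c • v) ∧ (∀ c : ℝ, u ≠ c • w) ∧ (∀ c : ℝ, v ≠ c • w)) →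
        LinearIndependent ℝ ![u, v, w]) :=
  stmt_4_general u v w hw huu hvv hww
end

section
/- Let u, v be nonzero vectors of ℝ⁴ which are null for the Minkowski form η and future-directed, i.e. η(u,u) = η(v,v) = 0, u₀ > 0 and v₀ > 0. Then η(u,v) ≥ 0, and η(u,v) = 0 if and only if u and v are proportional. -/
/-- For two nonzero future-directed null vectors `u`, `v` of Minkowski
space ℝ⁴, one has `η(u,v) ≥ 0`, with `η(u,v) = 0` iff `u` and `v` are proportional. -/
theorem stmt_5 (u v : Fin 4 → ℝ)
    (hu : u ≠ 0) (hv : v ≠ 0)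
    (huu : minkowski u u = 0) (hvv : minkowski v v = 0)
    (hu0 : 0 < u 0) (hv0 : 0 < v 0) :
    0 ≤ minkowski u v ∧ (minkowski u v = 0 ↔ ∃ c : ℝ, u = c • v) := by
  simp only [minkowski] at *
  set d : ℝ := u 0 * v 0 - u 1 * v 1 - u 2 * v 2 - u 3 * v 3 with hd
  have key : (u 0 * v 0 - (u 1 * v 1 + u 2 * v 2 + u 3 * v 3)) *
      (u 0 * v 0 + (u 1 * v 1 + u 2 * v 2 + u 3 * v 3)) =
      (u 1 * v 2 - u 2 * v 1) ^ 2 + (u 1 * v 3 - u 3 * v 1) ^ 2 +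
      (u 2 * v 3 - u 3 * v 2) ^ 2 := by
    linear_combination (v 0 * v 0) * huu + (u 1 * u 1 + u 2 * u 2 + u 3 * u 3) * hvv
  have hpos : 0 < u 0 * v 0 := mul_pos hu0 hv0
  have hge : 0 ≤ d := by
    nlinarith [key, sq_nonneg (u 1 * v 2 - u 2 * v 1), sq_nonneg (u 1 * v 3 - u 3 * v 1),
      sq_nonneg (u 2 * v 3 - u 3 * v 2)]
  refine ⟨hge, ?_, ?_⟩
  · intro h
    rw [hd] at h
    have hsum : (u 1 * v 2 - u 2 * v 1) ^ 2 + (u 1 * v 3 - u 3 * v 1) ^ 2 +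
        (u 2 * v 3 - u 3 * v 2) ^ 2 = 0 := by linear_combination -key + (u 0 * v 0 + (u 1 * v 1 + u 2 * v 2 + u 3 * v 3)) * h
    have s12 := sq_nonneg (u 1 * v 2 - u 2 * v 1)
    have s13 := sq_nonneg (u 1 * v 3 - u 3 * v 1)
    have s23 := sq_nonneg (u 2 * v 3 - u 3 * v 2)
    have c12 : u 1 * v 2 - u 2 * v 1 = 0 :=
      pow_eq_zero_iff (two_ne_zero) |>.mp (by linarith)
    have c13 : u 1 * v 3 - u 3 * v 1 = 0 :=
      pow_eq_zero_iff (two_ne_zero) |>.mp (by linarith)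
    have c23 : u 2 * v 3 - u 3 * v 2 = 0 :=
      pow_eq_zero_iff (two_ne_zero) |>.mp (by linarith)
    have hv0' : v 0 ≠ 0 := ne_of_gt hv0
    have h1 : v 0 * u 1 = u 0 * v 1 := by
      have e : v 0 * (v 0 * u 1) = v 0 * (u 0 * v 1) := by
        linear_combination u 1 * hvv + v 2 * c12 + v 3 * c13 - v 1 * h
      exact mul_left_cancel₀ hv0' e
    have h2 : v 0 * u 2 = u 0 * v 2 := by
      have e : v 0 * (v 0 * u 2) = v 0 * (u 0 * v 2) := by
        linear_combination u 2 * hvv - v 1 * c12 + v 3 * c23 - v 2 * h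
      exact mul_left_cancel₀ hv0' e
    have h3 : v 0 * u 3 = u 0 * v 3 := by
      have e : v 0 * (v 0 * u 3) = v 0 * (u 0 * v 3) := by
        linear_combination u 3 * hvv - v 1 * c13 - v 2 * c23 - v 3 * h
      exact mul_left_cancel₀ hv0' e
    clear key hsum s12 s13 s23 c12 c13 c23 hge hpos huu hvv hu hv hd h
    refine ⟨u 0 / v 0, funext fun i => ?_⟩
    have goal : ∀ j : Fin 4, u j = (u 0 / v 0) • v j := by
      intro j
      simp only [smul_eq_mul]
      rw [div_mul_eq_mul_div, eq_div_iff hv0']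
      fin_cases j
      · show u 0 * v 0 = u 0 * v 0; ring
      · show u 1 * v 0 = u 0 * v 1; linear_combination h1
      · show u 2 * v 0 = u 0 * v 2; linear_combination h2
      · show u 3 * v 0 = u 0 * v 3; linear_combination h3
    exact goal i
  · rintro ⟨c, rfl⟩
    simp only [Pi.smul_apply, smul_eq_mul] at hd ⊢
    rw [hd]
    linear_combination c * hvv
end

section
/- Let G be a real symmetric 4×4 matrix in emission form with det G < 0, and let K = G⁻¹. Then every diagonal entry of K is strictly negative: K₁₁ < 0, K₂₂ < 0, K₃₃ < 0, K₄₄ < 0. (Geometrically: the natural vectors of emission coordinates are spacelike.) -/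
/-!
By Cramer's rule `K i i = det Gᵢ / det G`, where `Gᵢ` is the principal `3 × 3` minor of `G`
obtained by deleting row and column `i`. That minor again has zero diagonal and positive
off-diagonal entries, so its determinant reduces to the two cyclic products
`g₀₁ g₁₂ g₂₀ + g₀₂ g₂₁ g₁₀ > 0`; dividing by `det G < 0` gives `K i i < 0`.
-/

namespace Matrix

theorem det_fin_three_of_diag_eq_zero {R : Type*} [CommRing R] (M : Matrix (Fin 3) (Fin 3) R)
    (hdiag : ∀ i, M i i = 0) :
    M.det = M 0 1 * M 1 2 * M 2 0 + M 0 2 * M 2 1 * M 1 0 := by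
  rw [det_fin_three, hdiag 0, hdiag 1, hdiag 2]
  ring

theorem det_pos_of_diag_eq_zero_of_pos_of_ne {R : Type*} [CommRing R] [LinearOrder R]
    [IsStrictOrderedRing R] (M : Matrix (Fin 3) (Fin 3) R) (hdiag : ∀ i, M i i = 0)
    (hpos : ∀ i j, i ≠ j → 0 < M i j) : 0 < M.det := by
  rw [det_fin_three_of_diag_eq_zero M hdiag]
  have := hpos 0 1 (by decide); have := hpos 1 2 (by decide); have := hpos 2 0 (by decide)
  have := hpos 0 2 (by decide); have := hpos 2 1 (by decide); have := hpos 1 0 (by decide)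
  positivity

theorem inv_apply_self_eq_det_submatrix {K : Type*} [Field K] {n : ℕ}
    (A : Matrix (Fin (n + 1)) (Fin (n + 1)) K) (i : Fin (n + 1)) :
    A⁻¹ i i = A.det⁻¹ * (A.submatrix i.succAbove i.succAbove).det := by
  rw [inv_def, smul_apply, smul_eq_mul, Ring.inverse_eq_inv', adjugate_fin_succ_eq_det_submatrix,
    ← two_mul, pow_mul, neg_one_sq, one_pow, one_mul]

end Matrix

theorem stmt_6_general (G : Matrix (Fin 4) (Fin 4) ℝ)
    (hdiag : ∀ i, G i i = 0)
    (hpos : ∀ i j, i ≠ j → 0 < G i j) (hdet : G.det < 0) :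
    ∀ i : Fin 4, G⁻¹ i i < 0 := by
  intro i
  have hminor : 0 < (G.submatrix i.succAbove i.succAbove).det :=
    Matrix.det_pos_of_diag_eq_zero_of_pos_of_ne _ (fun _ => hdiag _)
      (fun _ _ hjk => hpos _ _ (Fin.succAbove_right_injective.ne hjk))
  rw [Matrix.inv_apply_self_eq_det_submatrix]
  exact mul_neg_of_neg_of_pos (inv_lt_zero.2 hdet) hminor

/-- If `G` is a real symmetric 4×4 matrix in emission form (zero diagonal,
positive off-diagonal) with `det G < 0`, then every diagonal entry of `K = G⁻¹` is
strictly negative: the natural vectors of emission coordinates are spacelike. -/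
theorem stmt_6 (G : Matrix (Fin 4) (Fin 4) ℝ)
    (hsymm : G.IsSymm) (hdiag : ∀ i, G i i = 0)
    (hpos : ∀ i j, i ≠ j → 0 < G i j) (hdet : G.det < 0) :
    ∀ i : Fin 4, G⁻¹ i i < 0 :=
  stmt_6_general G hdiag hpos hdet
end

section
/- Let G be a real symmetric 4×4 matrix in emission form with det G < 0, and let K = G⁻¹. Then for every pair of distinct indices A, B, the 2×2 principal submatrix of K on rows and columns {A, B} is negative definite. (Geometrically: each plane spanned by a pair of natural vectors of emission coordinates is spacelike.) -/
/-!
Write `K = G⁻¹ = (det G)⁻¹ • adj G`. Permuting coordinates preserves emission form and the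
determinant, so it suffices to treat the pair `{0, 1}`. For a symmetric matrix with zero diagonal,
the cofactor `adj G 0 0` is `2 G₁₂ G₁₃ G₂₃ > 0`, hence `K₀₀ < 0` as `det G < 0`. By Jacobi's
complementary minor identity the `2 × 2` minor of `adj G` on `{0, 1}` is
`det G · det G[{2, 3}] = -det G · G₂₃²`, so the minor of `K` is `-G₂₃² / det G > 0`.
-/

/-- A real matrix is negative definite if it is symmetric and the associated quadratic
form is strictly negative on nonzero vectors. -/
def Matrix.NegDefR {n : ℕ} (M : Matrix (Fin n) (Fin n) ℝ) : Prop :=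
  M.IsSymm ∧ ∀ x : Fin n → ℝ, x ≠ 0 → dotProduct x (M.mulVec x) < 0

theorem Equiv.Perm.exists_apply_eq_apply_eq {α : Type*} [DecidableEq α] {a b x y : α}
    (hab : a ≠ b) (hxy : x ≠ y) : ∃ σ : Equiv.Perm α, σ a = x ∧ σ b = y := by
  have hb : swap a x y ≠ a := fun h =>
    hxy ((swap_apply_eq_iff.mp h).trans (swap_apply_left a x)).symm
  refine ⟨swap a x * swap b (swap a x y), ?_, ?_⟩
  · rw [Perm.mul_apply, swap_apply_of_ne_of_ne hab hb.symm, swap_apply_left]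
  · rw [Perm.mul_apply, swap_apply_left, swap_apply_self]

namespace Matrix

theorem negDefR_fin_two_of_det_pos {M : Matrix (Fin 2) (Fin 2) ℝ} (hM : M.IsSymm)
    (h00 : M 0 0 < 0) (hdet : 0 < M.det) : M.NegDefR := by
  refine ⟨hM, fun x hx => ?_⟩
  have h10 : M 1 0 = M 0 1 := hM.apply 0 1
  set q := M 0 0 * x 0 ^ 2 + 2 * M 0 1 * x 0 * x 1 + M 1 1 * x 1 ^ 2
  have hform : x ⬝ᵥ M *ᵥ x = q := by
    simp only [q, dotProduct, mulVec, Fin.sum_univ_two, h10]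
    ring
  have hsquare : M 0 0 * q = (M 0 0 * x 0 + M 0 1 * x 1) ^ 2 + M.det * x 1 ^ 2 := by
    rw [det_fin_two, h10]
    ring
  have hpos : 0 < M 0 0 * q := by
    rw [hsquare]
    by_cases h1 : x 1 = 0
    · have h0 : x 0 ≠ 0 := fun h0 => hx (funext fun i => by fin_cases i <;> simp [h0, h1])
      simp only [h1, mul_zero, add_zero, ne_eq, OfNat.ofNat_ne_zero, not_false_eq_true,
        zero_pow]
      exact pow_two_pos_of_ne_zero (mul_ne_zero h00.ne h0)
    · positivity
  rw [hform]
  exact neg_of_mul_pos_right hpos h00.le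

/-- Jacobi's complementary minor identity for the leading `2 × 2` minor of a `4 × 4` adjugate. -/
theorem det_adjugate_submatrix_zero_one {R : Type*} [CommRing R] (G : Matrix (Fin 4) (Fin 4) R) :
    (G.adjugate.submatrix ![0, 1] ![0, 1]).det = G.det * (G.submatrix ![2, 3] ![2, 3]).det := by
  simp only [submatrix_apply, adjugate_fin_succ_eq_det_submatrix, det_succ_row_zero,
    Fin.sum_univ_succ]
  simp [Fin.succAbove]
  ring

theorem adjugate_zero_zero_of_diag_eq_zero {R : Type*} [CommRing R]
    {G : Matrix (Fin 4) (Fin 4) R} (hG : G.IsSymm) (hdiag : ∀ i, G i i = 0) :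
    G.adjugate 0 0 = 2 * G 1 2 * G 1 3 * G 2 3 := by
  rw [adjugate_fin_succ_eq_det_submatrix, det_fin_three]
  simp [hdiag, hG.apply 2 1, hG.apply 3 1, hG.apply 3 2]
  ring

def IsEmissionForm {ι : Type*} (G : Matrix ι ι ℝ) : Prop :=
  G.IsSymm ∧ (∀ i, G i i = 0) ∧ ∀ i j, i ≠ j → 0 < G i j

theorem IsEmissionForm.submatrix {ι κ : Type*} {G : Matrix ι ι ℝ} (hG : G.IsEmissionForm)
    {f : κ → ι} (hf : Function.Injective f) : (G.submatrix f f).IsEmissionForm :=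
  ⟨hG.1.submatrix f, fun i => hG.2.1 (f i), fun _ _ hij => hG.2.2 _ _ (hf.ne hij)⟩

theorem IsEmissionForm.negDefR_inv_submatrix_zero_one {G : Matrix (Fin 4) (Fin 4) ℝ}
    (hG : G.IsEmissionForm) (hdet : G.det < 0) : (G⁻¹.submatrix ![0, 1] ![0, 1]).NegDefR := by
  have hK : G⁻¹.submatrix ![0, 1] ![0, 1] = G.det⁻¹ • G.adjugate.submatrix ![0, 1] ![0, 1] := by
    rw [inv_def, Ring.inverse_eq_inv']
    rfl
  have hadj : 0 < G.adjugate 0 0 := by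
    rw [adjugate_zero_zero_of_diag_eq_zero hG.1 hG.2.1]
    have h12 := hG.2.2 1 2 (by decide)
    have h13 := hG.2.2 1 3 (by decide)
    have h23 := hG.2.2 2 3 (by decide)
    positivity
  have hcompl : (G.submatrix ![2, 3] ![2, 3]).det = -G 2 3 ^ 2 := by
    rw [det_fin_two]
    simp [hG.2.1, hG.1.apply 2 3, sq]
  have hinv : G.det⁻¹ < 0 := inv_lt_zero.mpr hdet
  refine negDefR_fin_two_of_det_pos (hG.1.inv.submatrix _) ?_ ?_
  · rw [hK]
    exact mul_neg_of_neg_of_pos hinv hadj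
  · rw [hK, det_smul, det_adjugate_submatrix_zero_one, hcompl, Fintype.card_fin]
    calc 0 < G 2 3 ^ 2 * -G.det⁻¹ :=
          mul_pos (pow_pos (hG.2.2 2 3 (by decide)) 2) (neg_pos.mpr hinv)
      _ = G.det⁻¹ ^ 2 * (G.det * -G 2 3 ^ 2) := by field_simp

end Matrix

/-- If `G` is a real symmetric 4×4 matrix in emission form with
`det G < 0` and `K = G⁻¹`, then for every pair of distinct indices `A, B` the 2×2
principal submatrix of `K` on rows and columns `{A, B}` is negative definite:
each plane spanned by a pair of natural vectors is spacelike. -/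
theorem stmt_7 (G : Matrix (Fin 4) (Fin 4) ℝ)
    (hsymm : G.IsSymm) (hdiag : ∀ i, G i i = 0)
    (hpos : ∀ i j, i ≠ j → 0 < G i j) (hdet : G.det < 0) :
    ∀ A B : Fin 4, A ≠ B → (G⁻¹.submatrix ![A, B] ![A, B]).NegDefR := by
  intro A B hAB
  obtain ⟨σ, hσ0, hσ1⟩ :=
    Equiv.Perm.exists_apply_eq_apply_eq (by decide : (0 : Fin 4) ≠ 1) hAB
  have hGσ : (G.submatrix σ σ).IsEmissionForm :=
    Matrix.IsEmissionForm.submatrix ⟨hsymm, hdiag, hpos⟩ σ.injective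
  have key := hGσ.negDefR_inv_submatrix_zero_one (by rwa [Matrix.det_submatrix_equiv_self])
  rw [Matrix.inv_submatrix_equiv, Matrix.submatrix_submatrix] at key
  have hσ : ⇑σ ∘ ![0, 1] = ![A, B] := by
    ext i
    fin_cases i <;> simp [hσ0, hσ1]
  rwa [hσ] at key
end

section
/- Let G be a real symmetric invertible 4×4 matrix whose diagonal entries are all zero, and let K = G⁻¹. Then for every pair of distinct indices {A,B} with complementary pair {C,D}, one has K_{AB}·G_{AB} = K_{CD}·G_{CD}; explicitly K₁₂G₁₂ = K₃₄G₃₄, K₁₃G₁₃ = K₂₄G₂₄ and K₁₄G₁₄ = K₂₃G₂₃. -/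
/-!
Put `X = G⁻¹ ⊙ G` (entrywise product). Since `G` and `G⁻¹` are symmetric, `X` is symmetric,
it has zero diagonal because `G` does, and `G⁻¹ * G = 1` says that every row of `X` sums to `1`.
For pairwise distinct `A, B, C, D`, adding the row equations for `A` and `B` and subtracting
those for `C` and `D` leaves `2 X_AB = 2 X_CD`.
-/

open Matrix

theorem Fin.sum_univ_four_of_pairwise_ne {M : Type*} [AddCommMonoid M] (f : Fin 4 → M)
    {A B C D : Fin 4} (hAB : A ≠ B) (hAC : A ≠ C) (hAD : A ≠ D) (hBC : B ≠ C) (hBD : B ≠ D)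
    (hCD : C ≠ D) : ∑ k, f k = f A + f B + f C + f D := by
  have huniv : ({A, B, C, D} : Finset (Fin 4)) = Finset.univ :=
    Finset.eq_univ_of_card _ (by simp [Finset.card_insert_of_notMem, *])
  rw [← huniv, Finset.sum_insert (by simp [*]), Finset.sum_insert (by simp [*]),
    Finset.sum_pair hCD]
  abel

theorem Matrix.IsSymm.apply_eq_apply_of_sum_row_eq {M : Type*} [AddCommGroup M]
    [IsAddTorsionFree M] {X : Matrix (Fin 4) (Fin 4) M} (hX : X.IsSymm)
    (hdiag : ∀ i, X i i = 0) (hrow : ∀ i j, ∑ k, X i k = ∑ k, X j k)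
    {A B C D : Fin 4} (hAB : A ≠ B) (hAC : A ≠ C) (hAD : A ≠ D) (hBC : B ≠ C) (hBD : B ≠ D)
    (hCD : C ≠ D) : X A B = X C D := by
  have rowA := Fin.sum_univ_four_of_pairwise_ne (X A) hAB hAC hAD hBC hBD hCD
  have rowB := Fin.sum_univ_four_of_pairwise_ne (X B) hAB hAC hAD hBC hBD hCD
  have rowC := Fin.sum_univ_four_of_pairwise_ne (X C) hAB hAC hAD hBC hBD hCD
  have rowD := Fin.sum_univ_four_of_pairwise_ne (X D) hAB hAC hAD hBC hBD hCD
  have hsum := congrArg₂ (· + ·) (hrow A C) (hrow B D)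
  simp only [rowA, rowB, rowC, rowD, hdiag, hX.apply A B, hX.apply A C, hX.apply A D,
    hX.apply B C, hX.apply B D, hX.apply C D] at hsum
  apply nsmul_right_injective (M := M) two_ne_zero
  simp only [two_nsmul]
  rw [← sub_eq_zero] at hsum ⊢
  rw [← hsum]
  abel

theorem Matrix.IsSymm.hadamard {n α : Type*} [Mul α] {K G : Matrix n n α} (hK : K.IsSymm)
    (hG : G.IsSymm) : (K ⊙ G).IsSymm := by
  rw [IsSymm, transpose_hadamard, hK.eq, hG.eq]

theorem Matrix.sum_hadamard_apply_eq_one_of_mul_eq_one {n R : Type*} [Fintype n]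
    [DecidableEq n] [CommSemiring R] {K G : Matrix n n R} (hG : G.IsSymm) (h : K * G = 1)
    (i : n) : ∑ j, (K ⊙ G) i j = 1 := by
  simpa [mul_apply, hG.apply] using congrFun (congrFun h i) i

/-- For a real symmetric invertible 4×4 matrix `G` with zero diagonal
and `K = G⁻¹`, for every pair of distinct indices `{A,B}` with complementary pair
`{C,D}` one has `K_{AB}·G_{AB} = K_{CD}·G_{CD}`; explicitly `K₁₂G₁₂ = K₃₄G₃₄`,
`K₁₃G₁₃ = K₂₄G₂₄` and `K₁₄G₁₄ = K₂₃G₂₃`. -/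
theorem stmt_10 (G : Matrix (Fin 4) (Fin 4) ℝ)
    (hsymm : G.IsSymm) (hdiag : ∀ i, G i i = 0) (hinv : IsUnit G.det) :
    (∀ A B C D : Fin 4, A ≠ B → A ≠ C → A ≠ D → B ≠ C → B ≠ D → C ≠ D →
      G⁻¹ A B * G A B = G⁻¹ C D * G C D)
    ∧ G⁻¹ 0 1 * G 0 1 = G⁻¹ 2 3 * G 2 3
    ∧ G⁻¹ 0 2 * G 0 2 = G⁻¹ 1 3 * G 1 3
    ∧ G⁻¹ 0 3 * G 0 3 = G⁻¹ 1 2 * G 1 2 := by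
  have hX : (G⁻¹ ⊙ G).IsSymm := hsymm.inv.hadamard hsymm
  have hXdiag : ∀ i, (G⁻¹ ⊙ G) i i = 0 := fun i => by simp [hdiag]
  have hrowsum := sum_hadamard_apply_eq_one_of_mul_eq_one hsymm (nonsing_inv_mul G hinv)
  have hrow : ∀ i j, ∑ k, (G⁻¹ ⊙ G) i k = ∑ k, (G⁻¹ ⊙ G) j k := fun i j =>
    (hrowsum i).trans (hrowsum j).symm
  have hcompl : ∀ A B C D : Fin 4, A ≠ B → A ≠ C → A ≠ D → B ≠ C → B ≠ D → C ≠ D →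
      G⁻¹ A B * G A B = G⁻¹ C D * G C D := fun _ _ _ _ hAB hAC hAD hBC hBD hCD =>
    hX.apply_eq_apply_of_sum_row_eq hXdiag hrow hAB hAC hAD hBC hBD hCD
  refine ⟨hcompl, hcompl 0 1 2 3 ?_ ?_ ?_ ?_ ?_ ?_, hcompl 0 2 1 3 ?_ ?_ ?_ ?_ ?_ ?_,
    hcompl 0 3 1 2 ?_ ?_ ?_ ?_ ?_ ?_⟩ <;> decide
end

section
/- Let V be a real inner product space of dimension 2 and let u, v, w be three nonzero vectors of V such that α·u + β·v + γ·w = 0 for some real numbers α, β, γ > 0. Then the three non-oriented angles satisfy angle(u,v) + angle(v,w) + angle(w,u) = 2π. -/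
open InnerProductGeometry Real

set_option maxHeartbeats 1000000

lemma stmt12_key : ∀ θ : Real.Angle, θ.sign = 1 → 0 < θ.toReal := by
  intro θ hθ
  have hnn : 0 ≤ θ.toReal := Real.Angle.toReal_nonneg_iff_sign_nonneg.2 (by rw [hθ]; decide)
  rcases hnn.lt_or_eq with h | h
  · exact h
  · exfalso
    have : θ = 0 := Real.Angle.toReal_eq_zero_iff.1 h.symm
    rw [this, Real.Angle.sign_zero] at hθ
    exact absurd hθ (by decide)

/-- If three nonzero vectors `u, v, w` in a 2-dimensional real inner
product space satisfy `α•u + β•v + γ•w = 0` with `α, β, γ > 0`, then the three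
non-oriented angles sum to `2π`. -/
theorem stmt_12 (V : Type*) [NormedAddCommGroup V] [InnerProductSpace ℝ V]
    (hdim : Module.finrank ℝ V = 2)
    (u v w : V) (hu : u ≠ 0) (hv : v ≠ 0) (hw : w ≠ 0)
    (α β γ : ℝ) (hα : 0 < α) (hβ : 0 < β) (hγ : 0 < γ)
    (hsum : α • u + β • v + γ • w = 0) :
    angle u v + angle v w + angle w u = 2 * π := by
  haveI : Fact (Module.finrank ℝ V = 2) := ⟨hdim⟩
  haveI : FiniteDimensional ℝ V := FiniteDimensional.of_finrank_eq_succ hdim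
  set o : Orientation ℝ V (Fin 2) := (Module.finBasisOfFinrankEq ℝ V hdim).orientation with ho
  have hπ := Real.pi_pos
  -- express w in terms of u and v
  set a : ℝ := -(α / γ) with ha
  set b : ℝ := -(β / γ) with hb
  have ha0 : a < 0 := by
    rw [ha]; have : 0 < α / γ := div_pos hα hγ; linarith
  have hb0 : b < 0 := by
    rw [hb]; have : 0 < β / γ := div_pos hβ hγ; linarith
  have hw' : w = a • u + b • v := by
    have h0 : γ • w = -(α • u + β • v) := eq_neg_of_add_eq_zero_right hsum
    have h2 : γ • (a • u + b • v) = -(α • u + β • v) := by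
      rw [smul_add, smul_smul, smul_smul, ha, hb]
      have e1 : γ * -(α / γ) = -α := by field_simp [mul_comm]
      have e2 : γ * -(β / γ) = -β := by field_simp [mul_comm]
      rw [e1, e2, neg_smul, neg_smul, neg_add]
    exact smul_right_injective V hγ.ne' (h0.trans h2.symm)
  -- signs of the oriented angles
  have hsvw : (o.oangle v w).sign = (o.oangle u v).sign := by
    rw [hw', add_comm (a • u) (b • v), o.oangle_sign_smul_add_right v (a • u) b,
      o.oangle_sign_smul_right, o.oangle_rev u v, Real.Angle.sign_neg,
      _root_.sign_neg ha0]
    simp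
  have hsuw : (o.oangle u w).sign = -(o.oangle u v).sign := by
    rw [hw', o.oangle_sign_smul_add_right u (b • v) a, o.oangle_sign_smul_right,
      _root_.sign_neg hb0]
    simp
  have hswu : (o.oangle w u).sign = (o.oangle u v).sign := by
    rw [o.oangle_rev u w, Real.Angle.sign_neg, hsuw, neg_neg]
  -- the oriented angles sum to zero
  have hsum0 : o.oangle u v + o.oangle v w + o.oangle w u = 0 := by
    rw [o.oangle_add hu hv hw]
    exact o.oangle_add_oangle_rev u w
  set t₁ := (o.oangle u v).toReal with ht₁
  set t₂ := (o.oangle v w).toReal with ht₂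
  set t₃ := (o.oangle w u).toReal with ht₃
  have hcoe : ((t₁ + t₂ + t₃ : ℝ) : Real.Angle) = 0 := by
    rw [Real.Angle.coe_add, Real.Angle.coe_add, ht₁, ht₂, ht₃,
      Real.Angle.coe_toReal, Real.Angle.coe_toReal, Real.Angle.coe_toReal]
    exact hsum0
  obtain ⟨k, hk⟩ : ∃ k : ℤ, t₁ + t₂ + t₃ - 0 = 2 * π * k := by
    rw [← Real.Angle.angle_eq_iff_two_pi_dvd_sub]
    simpa using hcoe
  rw [sub_zero] at hk
  -- unoriented angles as absolute values
  have hA1 : angle u v = |t₁| := o.angle_eq_abs_oangle_toReal hu hv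
  have hA2 : angle v w = |t₂| := o.angle_eq_abs_oangle_toReal hv hw
  have hA3 : angle w u = |t₃| := o.angle_eq_abs_oangle_toReal hw hu
  have lo1 : -π < t₁ := Real.Angle.neg_pi_lt_toReal _
  have lo2 : -π < t₂ := Real.Angle.neg_pi_lt_toReal _
  have lo3 : -π < t₃ := Real.Angle.neg_pi_lt_toReal _
  have up1 : t₁ ≤ π := Real.Angle.toReal_le_pi _
  have up2 : t₂ ≤ π := Real.Angle.toReal_le_pi _
  have up3 : t₃ ≤ π := Real.Angle.toReal_le_pi _
  have hsgn3 : (o.oangle u v).sign = -1 ∨ (o.oangle u v).sign = 0 ∨ (o.oangle u v).sign = 1 := by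
    rcases h : (o.oangle u v).sign with _ | _ | _
    · exact Or.inr (Or.inl rfl)
    · exact Or.inl rfl
    · exact Or.inr (Or.inr rfl)
  clear_value t₁ t₂ t₃ a b
  clear hcoe hsum0 hw' ha hb ho
  rcases hsgn3 with hsgn | hsgn | hsgn
  · -- sign = -1 : each toReal in (-π, 0)
    have h1 : t₁ < 0 := by rw [ht₁]; exact Real.Angle.toReal_neg_iff_sign_neg.2 hsgn
    have h2 : t₂ < 0 := by rw [ht₂]; exact Real.Angle.toReal_neg_iff_sign_neg.2 (by rw [hsvw, hsgn])
    have h3 : t₃ < 0 := by rw [ht₃]; exact Real.Angle.toReal_neg_iff_sign_neg.2 (by rw [hswu, hsgn])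
    have hkm : k = -1 := by
      have hkub : k ≤ -1 := by
        by_contra h
        push_neg at h
        have : (0 : ℤ) ≤ k := by omega
        have : (0 : ℝ) ≤ (k : ℝ) := by exact_mod_cast this
        nlinarith
      have hklb : -1 ≤ k := by
        by_contra h
        push_neg at h
        have : k ≤ -2 := by omega
        have : (k : ℝ) ≤ -2 := by exact_mod_cast this
        nlinarith
      omega
    rw [hkm] at hk
    push_cast at hk
    rw [hA1, hA2, hA3, abs_of_neg h1, abs_of_neg h2, abs_of_neg h3]
    linarith
  · -- sign = 0 : each angle is 0 or π, toReal nonneg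
    have h1 : 0 ≤ t₁ := by rw [ht₁]; exact Real.Angle.toReal_nonneg_iff_sign_nonneg.2 (by rw [hsgn])
    have h2 : 0 ≤ t₂ := by rw [ht₂]; exact Real.Angle.toReal_nonneg_iff_sign_nonneg.2 (by rw [hsvw, hsgn])
    have h3 : 0 ≤ t₃ := by rw [ht₃]; exact Real.Angle.toReal_nonneg_iff_sign_nonneg.2 (by rw [hswu, hsgn])
    have hkm : k = 0 ∨ k = 1 := by
      have hklb : 0 ≤ k := by
        by_contra h
        push_neg at h
        have : k ≤ -1 := by omega
        have : (k : ℝ) ≤ -1 := by exact_mod_cast this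
        nlinarith
      have hkub : k ≤ 1 := by
        by_contra h
        push_neg at h
        have : (2 : ℤ) ≤ k := by omega
        have : (2 : ℝ) ≤ (k : ℝ) := by exact_mod_cast this
        nlinarith
      omega
    rcases hkm with hk0 | hk1
    · -- sum = 0 : all angles zero, contradiction with hsum
      exfalso
      rw [hk0] at hk
      push_cast at hk
      have e1 : t₁ = 0 := by linarith
      have e2 : t₂ = 0 := by linarith
      have hangle1 : angle u v = 0 := by rw [hA1, e1, abs_zero]
      have hangle2 : angle v w = 0 := by rw [hA2, e2, abs_zero]
      obtain ⟨-, r, hr, hvr⟩ := InnerProductGeometry.angle_eq_zero_iff.1 hangle1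
      obtain ⟨-, r', hr', hwr⟩ := InnerProductGeometry.angle_eq_zero_iff.1 hangle2
      rw [hvr] at hwr
      rw [hvr, hwr] at hsum
      have : (α + β * r + γ * (r' * r)) • u = 0 := by
        rw [add_smul, add_smul]
        simpa [smul_smul] using hsum
      rcases smul_eq_zero.1 this with hc | hc
      · nlinarith [mul_pos hβ hr, mul_pos hγ (mul_pos hr' hr)]
      · exact hu hc
    · rw [hk1] at hk
      push_cast at hk
      rw [hA1, hA2, hA3, abs_of_nonneg h1, abs_of_nonneg h2, abs_of_nonneg h3]
      linarith
  · -- sign = 1 : each toReal in (0, π)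
    have h1 : 0 < t₁ := by rw [ht₁]; exact stmt12_key _ hsgn
    have h2 : 0 < t₂ := by rw [ht₂]; exact stmt12_key _ (by rw [hsvw, hsgn])
    have h3 : 0 < t₃ := by rw [ht₃]; exact stmt12_key _ (by rw [hswu, hsgn])
    have hkm : k = 1 := by
      have hklb : 1 ≤ k := by
        by_contra h
        push_neg at h
        have : k ≤ 0 := by omega
        have : (k : ℝ) ≤ 0 := by exact_mod_cast this
        nlinarith
      have hkub : k ≤ 1 := by
        by_contra h
        push_neg at h
        have : (2 : ℤ) ≤ k := by omega
        have : (2 : ℝ) ≤ (k : ℝ) := by exact_mod_cast this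
        nlinarith
      omega
    rw [hkm] at hk
    push_cast at hk
    rw [hA1, hA2, hA3, abs_of_pos h1, abs_of_pos h2, abs_of_pos h3]
    linarith
end

section
/- Let G be a real symmetric 4×4 matrix in emission form with det G < 0, let K = G⁻¹, and for distinct indices A, B define the angle θ_{AB} = arccos( −K_{AB} / (√(−K_{AA})·√(−K_{BB})) ). Then each θ_{AB} lies strictly between 0 and π, the angles of complementary pairs coincide: θ₁₂ = θ₃₄, θ₁₃ = θ₂₄, θ₂₃ = θ₁₄, and θ₁₂ + θ₁₃ + θ₂₃ = 2π. -/
/-- The angle between the `A`-th and `B`-th natural vectors of emission coordinates,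
computed from the covariant metric `K`:
`θ_{AB} = arccos(−K_{AB}/(√(−K_{AA})·√(−K_{BB})))`. -/
noncomputable def emissionAngle (K : Matrix (Fin 4) (Fin 4) ℝ) (A B : Fin 4) : ℝ :=
  Real.arccos (-(K A B) / (Real.sqrt (-(K A A)) * Real.sqrt (-(K B B))))

/-!
Put `x = √(G₀₁G₂₃)`, `y = √(G₀₂G₁₃)`, `z = √(G₀₃G₁₂)`. Then
`det G = -(x + y + z)(-x + y + z)(x - y + z)(x + y - z)`, so `det G < 0` says exactly that
`x, y, z` are the sides of a nondegenerate triangle. Writing `G⁻¹ = (det G)⁻¹ • adj G`, the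
cosine of `θ₀₁` and of `θ₂₃` comes out as `(x² - y² - z²)/(2yz)`, which by the law of cosines is
minus the cosine of the triangle angle opposite `x`; similarly for the other two complementary
pairs. So every `θ_AB` is `π` minus an angle of this triangle, which gives the bounds, the
equalities, and the sum `3π - π = 2π`.
-/

open Real Matrix

def heronProduct (x y z : ℝ) : ℝ := (x + y + z) * (-x + y + z) * (x - y + z) * (x + y - z)

theorem heronProduct_rotate (x y z : ℝ) : heronProduct y z x = heronProduct x y z := by
  unfold heronProduct; ring

theorem sq_sub_sq_eq_heronProduct (x y z : ℝ) :
    (2 * y * z) ^ 2 - (y ^ 2 + z ^ 2 - x ^ 2) ^ 2 = heronProduct x y z := by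
  unfold heronProduct; ring

theorem heronProduct_sqrt {X Y Z : ℝ} (hX : 0 ≤ X) (hY : 0 ≤ Y) (hZ : 0 ≤ Z) :
    heronProduct √X √Y √Z = 2 * (X * Y + Y * Z + Z * X) - (X ^ 2 + Y ^ 2 + Z ^ 2) := by
  conv_rhs => rw [← sq_sqrt hX, ← sq_sqrt hY, ← sq_sqrt hZ]
  unfold heronProduct
  ring

noncomputable def triangleAngle (x y z : ℝ) : ℝ := arccos ((y ^ 2 + z ^ 2 - x ^ 2) / (2 * y * z))

section TriangleAngle

variable {x y z : ℝ}

theorem abs_lawOfCosines_lt_one (hy : 0 < y) (hz : 0 < z) (hH : 0 < heronProduct x y z) :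
    |(y ^ 2 + z ^ 2 - x ^ 2) / (2 * y * z)| < 1 := by
  rw [← sq_lt_one_iff_abs_lt_one, div_pow, div_lt_one (by positivity)]
  linarith [sq_sub_sq_eq_heronProduct x y z]

theorem triangleAngle_pos (hy : 0 < y) (hz : 0 < z) (hH : 0 < heronProduct x y z) :
    0 < triangleAngle x y z :=
  arccos_pos.2 (abs_lt.1 (abs_lawOfCosines_lt_one hy hz hH)).2

theorem triangleAngle_lt_pi (hy : 0 < y) (hz : 0 < z) (hH : 0 < heronProduct x y z) :
    triangleAngle x y z < π :=
  arccos_lt_pi.2 (abs_lt.1 (abs_lawOfCosines_lt_one hy hz hH)).1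

theorem cos_triangleAngle (hy : 0 < y) (hz : 0 < z) (hH : 0 < heronProduct x y z) :
    cos (triangleAngle x y z) = (y ^ 2 + z ^ 2 - x ^ 2) / (2 * y * z) := by
  obtain ⟨h₁, h₂⟩ := abs_le.1 (abs_lawOfCosines_lt_one hy hz hH).le
  exact cos_arccos h₁ h₂

theorem sin_triangleAngle (hy : 0 < y) (hz : 0 < z) :
    sin (triangleAngle x y z) = √(heronProduct x y z) / (2 * y * z) := by
  have h2yz : 0 < 2 * y * z := by positivity
  rw [triangleAngle, sin_arccos, ← sq_sub_sq_eq_heronProduct, ← sqrt_sq h2yz.le,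
    ← sqrt_div' _ (by positivity), sqrt_sq h2yz.le]
  congr 1
  field_simp

theorem triangleAngle_add_triangleAngle_add_triangleAngle (hx : 0 < x) (hy : 0 < y)
    (hz : 0 < z) (hH : 0 < heronProduct x y z) :
    triangleAngle x y z + triangleAngle y z x + triangleAngle z x y = π := by
  have hH' : 0 < heronProduct y z x := by rwa [heronProduct_rotate]
  have hH'' : 0 < heronProduct z x y := by rwa [heronProduct_rotate, heronProduct_rotate]
  set α := triangleAngle x y z
  set β := triangleAngle y z x
  set γ := triangleAngle z x y
  set S := √(heronProduct x y z)
  have hsα : sin α = S / (2 * y * z) := sin_triangleAngle hy hz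
  have hsβ : sin β = S / (2 * z * x) := by rw [sin_triangleAngle hz hx, heronProduct_rotate]
  have hsγ : sin γ = S / (2 * x * y) := by
    rw [sin_triangleAngle hx hy, heronProduct_rotate, heronProduct_rotate]
  have hsin : sin (α + β) = sin γ := by
    rw [sin_add, hsα, hsβ, hsγ, cos_triangleAngle hy hz hH, cos_triangleAngle hz hx hH']
    field_simp
    ring
  have hcos : cos (α + β) = cos (π - γ) := by
    rw [cos_add, cos_pi_sub, hsα, hsβ, cos_triangleAngle hy hz hH, cos_triangleAngle hz hx hH',
      cos_triangleAngle hx hy hH'']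
    field_simp
    rw [sq_sqrt hH.le, heronProduct]
    ring
  have hγ₀ := triangleAngle_pos hx hy hH''
  have hγπ := triangleAngle_lt_pi hx hy hH''
  -- the sine is nonpositive on `[π, 2π)`, whereas `sin (α + β) = sin γ > 0`
  have hαβ : α + β < π := by
    by_contra! h
    have : 0 ≤ sin (α + β - π) :=
      sin_nonneg_of_nonneg_of_le_pi (by linarith)
        (by linarith [triangleAngle_lt_pi hy hz hH, triangleAngle_lt_pi hz hx hH'])
    rw [sin_sub_pi, hsin] at this
    linarith [sin_pos_of_pos_of_lt_pi hγ₀ hγπ]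
  have := injOn_cos
    ⟨by linarith [triangleAngle_pos hy hz hH, triangleAngle_pos hz hx hH'], hαβ.le⟩
    ⟨by linarith, by linarith⟩ hcos
  linarith

end TriangleAngle

theorem emissionAngle_comm {K : Matrix (Fin 4) (Fin 4) ℝ} (hK : K.IsSymm) (A B : Fin 4) :
    emissionAngle K A B = emissionAngle K B A := by
  rw [emissionAngle, emissionAngle, hK.apply A B, mul_comm]

theorem emissionAngle_smul_eq_pi_sub_triangleAngle {r : ℝ} (hr : r < 0)
    {N : Matrix (Fin 4) (Fin 4) ℝ} {A B : Fin 4} {k x y z : ℝ} (hk : 0 < k) (hy : 0 < y)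
    (hz : 0 < z) (hA : 0 ≤ N A A) (hAB : N A A * N B B = (2 * k * y * z) ^ 2)
    (hN : N A B = k * (x ^ 2 - y ^ 2 - z ^ 2)) :
    emissionAngle (r • N) A B = π - triangleAngle x y z := by
  have hr' : 0 ≤ -r := by linarith
  have hsqrt : √(N A A) * √(N B B) = 2 * k * y * z := by
    rw [← sqrt_mul hA, hAB, sqrt_sq (by positivity)]
  have hr'' : √(-r) * √(-r) = -r := mul_self_sqrt hr'
  rw [emissionAngle, triangleAngle, ← arccos_neg]
  simp only [Matrix.smul_apply, smul_eq_mul, ← neg_mul]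
  rw [sqrt_mul hr', sqrt_mul hr', mul_mul_mul_comm, hr'', hsqrt, hN]
  have hr₀ : r ≠ 0 := hr.ne
  congr 1
  field_simp
  ring

def emissionMatrix (a b c d e f : ℝ) : Matrix (Fin 4) (Fin 4) ℝ :=
  !![0, a, b, c; a, 0, d, e; b, d, 0, f; c, e, f, 0]

theorem eq_emissionMatrix {G : Matrix (Fin 4) (Fin 4) ℝ} (hsymm : G.IsSymm)
    (hdiag : ∀ i, G i i = 0) :
    G = emissionMatrix (G 0 1) (G 0 2) (G 0 3) (G 1 2) (G 1 3) (G 2 3) := by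
  ext i j
  fin_cases i <;> fin_cases j <;> simp [emissionMatrix, hdiag] <;> exact hsymm.apply _ _

theorem det_emissionMatrix (a b c d e f : ℝ) :
    (emissionMatrix a b c d e f).det =
      (a * f) ^ 2 + (b * e) ^ 2 + (c * d) ^ 2
        - 2 * (a * f * (b * e) + b * e * (c * d) + c * d * (a * f)) := by
  rw [det_succ_row_zero, Fin.sum_univ_four]
  simp [emissionMatrix, det_fin_three, Fin.succAbove, Fin.lt_def]
  ring

theorem adjugate_emissionMatrix (a b c d e f : ℝ) :
    (emissionMatrix a b c d e f).adjugate =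
      !![2*d*e*f, f*(a*f - b*e - c*d), e*(b*e - c*d - a*f), d*(c*d - a*f - b*e);
         f*(a*f - b*e - c*d), 2*b*c*f, c*(c*d - a*f - b*e), b*(b*e - c*d - a*f);
         e*(b*e - c*d - a*f), c*(c*d - a*f - b*e), 2*a*c*e, a*(a*f - b*e - c*d);
         d*(c*d - a*f - b*e), b*(b*e - c*d - a*f), a*(a*f - b*e - c*d), 2*a*b*d] := by
  ext i j
  rw [adjugate_fin_succ_eq_det_submatrix, det_fin_three]
  fin_cases i <;> fin_cases j <;> simp [emissionMatrix, Fin.succAbove, Fin.lt_def] <;> ring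

theorem emissionAngle_inv_emissionMatrix {a b c d e f x y z : ℝ} (ha : 0 < a) (hb : 0 < b)
    (hc : 0 < c) (hd : 0 < d) (he : 0 < e) (hf : 0 < f) (hx : 0 < x) (hy : 0 < y) (hz : 0 < z)
    (hx2 : x ^ 2 = a * f) (hy2 : y ^ 2 = b * e) (hz2 : z ^ 2 = c * d)
    (hdet : (emissionMatrix a b c d e f).det < 0) :
    emissionAngle (emissionMatrix a b c d e f)⁻¹ 0 1 = π - triangleAngle x y z ∧
    emissionAngle (emissionMatrix a b c d e f)⁻¹ 2 3 = π - triangleAngle x y z ∧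
    emissionAngle (emissionMatrix a b c d e f)⁻¹ 0 2 = π - triangleAngle y z x ∧
    emissionAngle (emissionMatrix a b c d e f)⁻¹ 1 3 = π - triangleAngle y z x ∧
    emissionAngle (emissionMatrix a b c d e f)⁻¹ 1 2 = π - triangleAngle z x y ∧
    emissionAngle (emissionMatrix a b c d e f)⁻¹ 0 3 = π - triangleAngle z x y := by
  have hr := inv_lt_zero.2 hdet
  rw [inv_def, Ring.inverse_eq_inv, adjugate_emissionMatrix]
  refine ⟨emissionAngle_smul_eq_pi_sub_triangleAngle hr hf hy hz ?_ ?_ ?_,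
    emissionAngle_smul_eq_pi_sub_triangleAngle hr ha hy hz ?_ ?_ ?_,
    emissionAngle_smul_eq_pi_sub_triangleAngle hr he hz hx ?_ ?_ ?_,
    emissionAngle_smul_eq_pi_sub_triangleAngle hr hb hz hx ?_ ?_ ?_,
    emissionAngle_smul_eq_pi_sub_triangleAngle hr hc hx hy ?_ ?_ ?_,
    emissionAngle_smul_eq_pi_sub_triangleAngle hr hd hx hy ?_ ?_ ?_⟩
  all_goals simp [mul_pow, hx2, hy2, hz2]
  all_goals first | positivity | ring

/-- For a real symmetric 4×4 matrix `G` in emission form with `det G < 0`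
and `K = G⁻¹`, the angles `θ_{AB}` lie strictly between `0` and `π`, angles of
complementary pairs coincide (`θ₁₂ = θ₃₄`, `θ₁₃ = θ₂₄`, `θ₂₃ = θ₁₄`), and
`θ₁₂ + θ₁₃ + θ₂₃ = 2π`. -/
theorem stmt_13 (G : Matrix (Fin 4) (Fin 4) ℝ)
    (hsymm : G.IsSymm) (hdiag : ∀ i, G i i = 0)
    (hpos : ∀ i j, i ≠ j → 0 < G i j) (hdet : G.det < 0) :
    (∀ A B : Fin 4, A ≠ B →
        0 < emissionAngle G⁻¹ A B ∧ emissionAngle G⁻¹ A B < Real.pi)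
    ∧ emissionAngle G⁻¹ 0 1 = emissionAngle G⁻¹ 2 3
    ∧ emissionAngle G⁻¹ 0 2 = emissionAngle G⁻¹ 1 3
    ∧ emissionAngle G⁻¹ 1 2 = emissionAngle G⁻¹ 0 3
    ∧ emissionAngle G⁻¹ 0 1 + emissionAngle G⁻¹ 0 2 + emissionAngle G⁻¹ 1 2
        = 2 * Real.pi := by
  obtain ⟨a, b, c, d, e, f, ha, hb, hc, hd, he, hf, rfl⟩ : ∃ a b c d e f : ℝ,
      0 < a ∧ 0 < b ∧ 0 < c ∧ 0 < d ∧ 0 < e ∧ 0 < f ∧ G = emissionMatrix a b c d e f :=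
    ⟨_, _, _, _, _, _, hpos 0 1 (by decide), hpos 0 2 (by decide), hpos 0 3 (by decide),
      hpos 1 2 (by decide), hpos 1 3 (by decide), hpos 2 3 (by decide),
      eq_emissionMatrix hsymm hdiag⟩
  have hX := mul_pos ha hf
  have hY := mul_pos hb he
  have hZ := mul_pos hc hd
  have hH : 0 < heronProduct √(a * f) √(b * e) √(c * d) := by
    rw [heronProduct_sqrt hX.le hY.le hZ.le]
    linarith [det_emissionMatrix a b c d e f]
  set x := √(a * f)
  set y := √(b * e)
  set z := √(c * d)
  have hx : 0 < x := sqrt_pos.2 hX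
  have hy : 0 < y := sqrt_pos.2 hY
  have hz : 0 < z := sqrt_pos.2 hZ
  obtain ⟨h01, h23, h02, h13, h12, h03⟩ := emissionAngle_inv_emissionMatrix ha hb hc hd he hf
    hx hy hz (sq_sqrt hX.le) (sq_sqrt hY.le) (sq_sqrt hZ.le) hdet
  have hbounds : ∀ A B : Fin 4, A < B → 0 < emissionAngle (emissionMatrix a b c d e f)⁻¹ A B ∧
      emissionAngle (emissionMatrix a b c d e f)⁻¹ A B < π := by
    have hH' : 0 < heronProduct y z x := by rwa [heronProduct_rotate]
    have hH'' : 0 < heronProduct z x y := by rwa [heronProduct_rotate]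
    intro A B hAB
    fin_cases A <;> fin_cases B <;> simp only [Fin.reduceFinMk, Fin.reduceLT] at hAB <;>
      simp [triangleAngle_pos, triangleAngle_lt_pi, *]
  refine ⟨fun A B hAB => ?_, h01.trans h23.symm, h02.trans h13.symm, h12.trans h03.symm, ?_⟩
  · rcases hAB.lt_or_gt with h | h
    · exact hbounds A B h
    · rw [emissionAngle_comm hsymm.inv]
      exact hbounds B A h
  · rw [h01, h02, h12]
    linarith [triangleAngle_add_triangleAngle_add_triangleAngle hx hy hz hH]
end

section
/- Let θ₁, θ₂, θ₃ be real numbers in the open interval (0, π) with θ₁ + θ₂ + θ₃ = 2π, and set X = cos θ₁, Y = cos θ₂, Z = cos θ₃. Then the 4×4 symmetric matrix M with rows (1, Z, Y, X), (Z, 1, X, Y), (Y, X, 1, Z), (X, Y, Z, 1) has determinant det M = −4·sin²θ₁·sin²θ₂·sin²θ₃. -/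
/-!
`M(X, Y, Z)` is the group matrix of the Klein four-group, so its determinant is the product of
its four character values `1 ± X ± Y ± Z` (an even number of minus signs). Writing `θᵢ = 2 uᵢ`
with `u₁ + u₂ + u₃ = π`, each character value factors into half-angle cosines and sines, and the
product regroups as `-4 ∏ (2 sin uᵢ cos uᵢ)² = -4 ∏ sin² θᵢ`.
-/

open Real

theorem Matrix.det_kleinFour_symm {R : Type*} [CommRing R] (W X Y Z : R) :
    (Matrix.of ![![W, Z, Y, X], ![Z, W, X, Y], ![Y, X, W, Z], ![X, Y, Z, W]]).det =
      (W + X + Y + Z) * (W + X - Y - Z) * (W - X + Y - Z) * (W - X - Y + Z) := by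
  simp [Matrix.det_succ_row_zero, Fin.sum_univ_succ, Fin.succAbove]
  ring

lemma one_add_cos_two_mul_add_add_of_add_eq_pi {u v w : ℝ} (h : u + v + w = π) :
    1 + cos (2 * u) + cos (2 * v) + cos (2 * w) = -4 * cos u * cos v * cos w := by
  obtain rfl : w = π - (u + v) := by linarith
  simp only [cos_two_mul, cos_pi_sub, cos_add]
  linear_combination (2 * cos v ^ 2 - 2 + 4 * sin v ^ 2) * sin_sq_add_cos_sq u
    + (4 - 4 * cos u ^ 2 - 2 * sin u ^ 2) * sin_sq_add_cos_sq v

lemma one_add_cos_two_mul_sub_sub_of_add_eq_pi {u v w : ℝ} (h : u + v + w = π) :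
    1 + cos (2 * u) - cos (2 * v) - cos (2 * w) = 4 * cos u * sin v * sin w := by
  obtain rfl : u = π - (v + w) := by linarith
  simp only [cos_two_mul, cos_pi_sub, cos_add]
  linear_combination (2 * cos w ^ 2 - 2) * sin_sq_add_cos_sq v - 2 * sin v ^ 2 * sin_sq_add_cos_sq w

theorem stmt_15_general (θ₁ θ₂ θ₃ : ℝ)
    (hsum : θ₁ + θ₂ + θ₃ = 2 * Real.pi) :
    (Matrix.of
      ![![1, Real.cos θ₃, Real.cos θ₂, Real.cos θ₁],
        ![Real.cos θ₃, 1, Real.cos θ₁, Real.cos θ₂],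
        ![Real.cos θ₂, Real.cos θ₁, 1, Real.cos θ₃],
        ![Real.cos θ₁, Real.cos θ₂, Real.cos θ₃, 1]]).det
      = -4 * Real.sin θ₁ ^ 2 * Real.sin θ₂ ^ 2 * Real.sin θ₃ ^ 2 := by
  obtain ⟨u, rfl⟩ : ∃ u, θ₁ = 2 * u := ⟨θ₁ / 2, by ring⟩
  obtain ⟨v, rfl⟩ : ∃ v, θ₂ = 2 * v := ⟨θ₂ / 2, by ring⟩
  obtain ⟨w, rfl⟩ : ∃ w, θ₃ = 2 * w := ⟨θ₃ / 2, by ring⟩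
  have huvw : u + v + w = π := by linarith
  have h₂ : 1 - cos (2 * u) + cos (2 * v) - cos (2 * w) = 4 * cos v * sin u * sin w := by
    linarith [one_add_cos_two_mul_sub_sub_of_add_eq_pi (show v + u + w = π by linarith)]
  have h₃ : 1 - cos (2 * u) - cos (2 * v) + cos (2 * w) = 4 * cos w * sin u * sin v := by
    linarith [one_add_cos_two_mul_sub_sub_of_add_eq_pi (show w + u + v = π by linarith)]
  rw [Matrix.det_kleinFour_symm, one_add_cos_two_mul_add_add_of_add_eq_pi huvw,
    one_add_cos_two_mul_sub_sub_of_add_eq_pi huvw, h₂, h₃, sin_two_mul, sin_two_mul, sin_two_mul]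
  ring

/-- For `θ₁, θ₂, θ₃ ∈ (0, π)` with `θ₁ + θ₂ + θ₃ = 2π`, setting
`X = cos θ₁`, `Y = cos θ₂`, `Z = cos θ₃`, the symmetric matrix `M` with rows
`(1,Z,Y,X), (Z,1,X,Y), (Y,X,1,Z), (X,Y,Z,1)` has
`det M = −4·sin²θ₁·sin²θ₂·sin²θ₃`. -/
theorem stmt_15 (θ₁ θ₂ θ₃ : ℝ)
    (h₁ : θ₁ ∈ Set.Ioo 0 Real.pi) (h₂ : θ₂ ∈ Set.Ioo 0 Real.pi)
    (h₃ : θ₃ ∈ Set.Ioo 0 Real.pi) (hsum : θ₁ + θ₂ + θ₃ = 2 * Real.pi) :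
    (Matrix.of
      ![![1, Real.cos θ₃, Real.cos θ₂, Real.cos θ₁],
        ![Real.cos θ₃, 1, Real.cos θ₁, Real.cos θ₂],
        ![Real.cos θ₂, Real.cos θ₁, 1, Real.cos θ₃],
        ![Real.cos θ₁, Real.cos θ₂, Real.cos θ₃, 1]]).det
      = -4 * Real.sin θ₁ ^ 2 * Real.sin θ₂ ^ 2 * Real.sin θ₃ ^ 2 :=
  stmt_15_general θ₁ θ₂ θ₃ hsum
end

section
/- Let θ₁, θ₂, θ₃ be real numbers in the open interval (0, π) with θ₁ + θ₂ + θ₃ = 2π, set X = cos θ₁, Y = cos θ₂, Z = cos θ₃ and a = sin θ₁, b = sin θ₂, c = sin θ₃, and let M be the 4×4 symmetric matrix with rows (1, Z, Y, X), (Z, 1, X, Y), (Y, X, 1, Z), (X, Y, Z, 1). Then −M is invertible and its inverse is (−M)⁻¹ = (1/(2abc)) · N, where N is the matrix with rows (0, c, b, a), (c, 0, a, b), (b, a, 0, c), (a, b, c, 0). -/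
set_option maxHeartbeats 1600000 in
/-- For `θ₁, θ₂, θ₃ ∈ (0, π)` with `θ₁ + θ₂ + θ₃ = 2π`, setting
`X = cos θ₁`, `Y = cos θ₂`, `Z = cos θ₃`, `a = sin θ₁`, `b = sin θ₂`, `c = sin θ₃`,
and `M` the matrix with rows `(1,Z,Y,X), (Z,1,X,Y), (Y,X,1,Z), (X,Y,Z,1)`, the matrix
`−M` is invertible and `(−M)⁻¹ = (1/(2abc))·N` where `N` has rows
`(0,c,b,a), (c,0,a,b), (b,a,0,c), (a,b,c,0)`. -/
theorem stmt_16 (θ₁ θ₂ θ₃ : ℝ)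
    (h₁ : θ₁ ∈ Set.Ioo 0 Real.pi) (h₂ : θ₂ ∈ Set.Ioo 0 Real.pi)
    (h₃ : θ₃ ∈ Set.Ioo 0 Real.pi) (hsum : θ₁ + θ₂ + θ₃ = 2 * Real.pi) :
    IsUnit (-(Matrix.of
      ![![1, Real.cos θ₃, Real.cos θ₂, Real.cos θ₁],
        ![Real.cos θ₃, 1, Real.cos θ₁, Real.cos θ₂],
        ![Real.cos θ₂, Real.cos θ₁, 1, Real.cos θ₃],
        ![Real.cos θ₁, Real.cos θ₂, Real.cos θ₃, 1]]))
    ∧ (-(Matrix.of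
      ![![1, Real.cos θ₃, Real.cos θ₂, Real.cos θ₁],
        ![Real.cos θ₃, 1, Real.cos θ₁, Real.cos θ₂],
        ![Real.cos θ₂, Real.cos θ₁, 1, Real.cos θ₃],
        ![Real.cos θ₁, Real.cos θ₂, Real.cos θ₃, 1]]))⁻¹
      = (1 / (2 * Real.sin θ₁ * Real.sin θ₂ * Real.sin θ₃)) •
        Matrix.of
          ![![0, Real.sin θ₃, Real.sin θ₂, Real.sin θ₁],
            ![Real.sin θ₃, 0, Real.sin θ₁, Real.sin θ₂],
            ![Real.sin θ₂, Real.sin θ₁, 0, Real.sin θ₃],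
            ![Real.sin θ₁, Real.sin θ₂, Real.sin θ₃, 0]] := by
  obtain ⟨h1a, h1b⟩ := h₁
  obtain ⟨h2a, h2b⟩ := h₂
  obtain ⟨h3a, h3b⟩ := h₃
  have hs1 : 0 < Real.sin θ₁ := Real.sin_pos_of_pos_of_lt_pi h1a h1b
  have hs2 : 0 < Real.sin θ₂ := Real.sin_pos_of_pos_of_lt_pi h2a h2b
  have hs3 : 0 < Real.sin θ₃ := Real.sin_pos_of_pos_of_lt_pi h3a h3b
  have hθ3 : θ₃ = 2 * Real.pi - (θ₁ + θ₂) := by linarith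
  have hc : Real.cos θ₃ = Real.cos θ₁ * Real.cos θ₂ - Real.sin θ₁ * Real.sin θ₂ := by
    rw [hθ3, Real.cos_sub, Real.cos_two_pi, Real.sin_two_pi, Real.cos_add]
    ring
  have hs : Real.sin θ₃ = -(Real.sin θ₁ * Real.cos θ₂ + Real.cos θ₁ * Real.sin θ₂) := by
    rw [hθ3, Real.sin_sub, Real.cos_two_pi, Real.sin_two_pi, Real.sin_add]
    ring
  have p1 := Real.sin_sq_add_cos_sq θ₁
  have p2 := Real.sin_sq_add_cos_sq θ₂
  set X := Real.cos θ₁ with hX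
  set Y := Real.cos θ₂ with hY
  set Z := Real.cos θ₃ with hZ
  set a := Real.sin θ₁ with ha
  set b := Real.sin θ₂ with hb
  set c := Real.sin θ₃ with hcc
  have k1 : Z * c + Y * b + X * a = -(2 * a * b * c) := by
    rw [hc, hs]; linear_combination (-(X * a)) * p2 + (-(Y * b)) * p1
  have k2 : c + Y * a + X * b = 0 := by rw [hs]; ring
  have k3 : b + Z * a + X * c = 0 := by
    rw [hc, hs]; linear_combination (-b) * p1
  have k4 : a + Z * b + Y * c = 0 := by
    rw [hc, hs]; linear_combination (-a) * p2
  have habc : 2 * a * b * c ≠ 0 := by positivity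
  have hMN : (-(Matrix.of
      ![![1, Z, Y, X], ![Z, 1, X, Y], ![Y, X, 1, Z], ![X, Y, Z, 1]])) *
      (Matrix.of ![![0, c, b, a], ![c, 0, a, b], ![b, a, 0, c], ![a, b, c, 0]])
      = (2 * a * b * c) • (1 : Matrix (Fin 4) (Fin 4) ℝ) := by
    ext i j
    fin_cases i <;> fin_cases j <;>
      simp [Matrix.mul_apply, Fin.sum_univ_four, Matrix.one_apply] <;>
      first
        | linear_combination -k1
        | linear_combination -k2
        | linear_combination -k3
        | linear_combination -k4
  have hmul : (-(Matrix.of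
      ![![1, Z, Y, X], ![Z, 1, X, Y], ![Y, X, 1, Z], ![X, Y, Z, 1]])) *
      ((1 / (2 * a * b * c)) •
        Matrix.of ![![0, c, b, a], ![c, 0, a, b], ![b, a, 0, c], ![a, b, c, 0]]) = 1 := by
    rw [Matrix.mul_smul, hMN, smul_smul, one_div, inv_mul_cancel₀ habc, one_smul]
  exact ⟨⟨⟨_, _, hmul, mul_eq_one_comm.mp hmul⟩, rfl⟩, Matrix.inv_eq_right_inv hmul⟩
end

section
/- Let X, Y, Z be real numbers. Then the conditions X² + Y² + Z² − 2XYZ = 1 together with YZ > X, XZ > Y and XY > Z hold if and only if there exist angles θ₁, θ₂, θ₃ in the open interval (0, π) with θ₁ + θ₂ + θ₃ = 2π such that X = cos θ₁, Y = cos θ₂ and Z = cos θ₃. In particular these conditions imply X² < 1, Y² < 1 and Z² < 1. -/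
open Real

/-- If `cos v = cos u` with `u ∈ (0,π)` and `v ∈ (0, 2π)`, then `v = u` or `v = 2π - u`. -/
lemma cos_eq_cases_aux {u v : ℝ} (hu : u ∈ Set.Ioo 0 Real.pi) (hv0 : 0 < v)
    (hv2 : v < 2 * Real.pi) (h : Real.cos v = Real.cos u) : v = u ∨ v = 2 * Real.pi - u := by
  rcases le_or_gt v Real.pi with hle | hgt
  · left
    exact Real.injOn_cos ⟨hv0.le, hle⟩ ⟨hu.1.le, hu.2.le⟩ h
  · right
    have h2 : Real.cos (2 * Real.pi - v) = Real.cos u := by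
      rw [Real.cos_sub]; simpa using h
    have := Real.injOn_cos ⟨by linarith, by linarith⟩ ⟨hu.1.le, hu.2.le⟩ h2
    linarith

/-- Real numbers `X, Y, Z` satisfy `X² + Y² + Z² − 2XYZ = 1`, `YZ > X`,
`XZ > Y` and `XY > Z` iff there exist angles `θ₁, θ₂, θ₃ ∈ (0, π)` with
`θ₁ + θ₂ + θ₃ = 2π` and `X = cos θ₁`, `Y = cos θ₂`, `Z = cos θ₃`; in particular these
conditions imply `X² < 1`, `Y² < 1` and `Z² < 1`. -/
theorem stmt_17 (X Y Z : ℝ) :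
    ((X ^ 2 + Y ^ 2 + Z ^ 2 - 2 * X * Y * Z = 1
        ∧ Y * Z > X ∧ X * Z > Y ∧ X * Y > Z) ↔
      ∃ θ₁ θ₂ θ₃ : ℝ, θ₁ ∈ Set.Ioo 0 Real.pi ∧ θ₂ ∈ Set.Ioo 0 Real.pi
        ∧ θ₃ ∈ Set.Ioo 0 Real.pi ∧ θ₁ + θ₂ + θ₃ = 2 * Real.pi
        ∧ X = Real.cos θ₁ ∧ Y = Real.cos θ₂ ∧ Z = Real.cos θ₃)
    ∧ ((X ^ 2 + Y ^ 2 + Z ^ 2 - 2 * X * Y * Z = 1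
        ∧ Y * Z > X ∧ X * Z > Y ∧ X * Y > Z) →
      X ^ 2 < 1 ∧ Y ^ 2 < 1 ∧ Z ^ 2 < 1) := by
  -- The "in particular" part
  have key : (X ^ 2 + Y ^ 2 + Z ^ 2 - 2 * X * Y * Z = 1
        ∧ Y * Z > X ∧ X * Z > Y ∧ X * Y > Z) →
      X ^ 2 < 1 ∧ Y ^ 2 < 1 ∧ Z ^ 2 < 1 := by
    rintro ⟨h, h1, h2, h3⟩
    have aux : ∀ a b c : ℝ, a ^ 2 + b ^ 2 + c ^ 2 - 2 * a * b * c = 1 →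
        b * c > a → a * c > b → a * b > c → a ^ 2 < 1 := by
      intro a b c h h1 h2 h3
      have id1 : (a * c - b) * (a * b - c) = (1 - a ^ 2) * (b * c - a) := by
        linear_combination (-a) * h
      nlinarith [mul_pos (sub_pos.2 h2) (sub_pos.2 h3), sub_pos.2 h1, id1]
    exact ⟨aux X Y Z h h1 h2 h3,
      aux Y X Z (by linear_combination h) h2 h1 (by linarith),
      aux Z X Y (by linear_combination h) (by linarith) (by linarith) (by linarith)⟩
  constructor
  swap
  · exact key
  constructor
  · rintro ⟨h, h1, h2, h3⟩
    obtain ⟨hX2, hY2, hZ2⟩ := key ⟨h, h1, h2, h3⟩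
    have hX1 : -1 < X ∧ X < 1 := abs_lt.mp (by nlinarith [abs_nonneg X, sq_abs X] : |X| < 1)
    have hY1 : -1 < Y ∧ Y < 1 := abs_lt.mp (by nlinarith [abs_nonneg Y, sq_abs Y] : |Y| < 1)
    have hZ1 : -1 < Z ∧ Z < 1 := abs_lt.mp (by nlinarith [abs_nonneg Z, sq_abs Z] : |Z| < 1)
    set α := Real.arccos X with hα
    set β := Real.arccos Y with hβ
    set γ := Real.arccos Z with hγ
    have hcα : Real.cos α = X := Real.cos_arccos hX1.1.le hX1.2.le
    have hcβ : Real.cos β = Y := Real.cos_arccos hY1.1.le hY1.2.le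
    have hcγ : Real.cos γ = Z := Real.cos_arccos hZ1.1.le hZ1.2.le
    have hsα : Real.sin α = Real.sqrt (1 - X ^ 2) := Real.sin_arccos X
    have hsβ : Real.sin β = Real.sqrt (1 - Y ^ 2) := Real.sin_arccos Y
    have hsγ : Real.sin γ = Real.sqrt (1 - Z ^ 2) := Real.sin_arccos Z
    have hαmem : α ∈ Set.Ioo 0 Real.pi := by
      refine ⟨Real.arccos_pos.2 hX1.2, lt_of_le_of_ne (Real.arccos_le_pi X) ?_⟩
      intro hc; exact absurd (Real.arccos_eq_pi.1 hc) (by linarith [hX1.1])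
    have hβmem : β ∈ Set.Ioo 0 Real.pi := by
      refine ⟨Real.arccos_pos.2 hY1.2, lt_of_le_of_ne (Real.arccos_le_pi Y) ?_⟩
      intro hc; exact absurd (Real.arccos_eq_pi.1 hc) (by linarith [hY1.1])
    have hγmem : γ ∈ Set.Ioo 0 Real.pi := by
      refine ⟨Real.arccos_pos.2 hZ1.2, lt_of_le_of_ne (Real.arccos_le_pi Z) ?_⟩
      intro hc; exact absurd (Real.arccos_eq_pi.1 hc) (by linarith [hZ1.1])
    -- √(1-Y²)·√(1-Z²) = YZ - X, and similarly
    have sqprod : ∀ a b c : ℝ, a ^ 2 < 1 → b ^ 2 < 1 →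
        a * b > c → a ^ 2 + b ^ 2 + c ^ 2 - 2 * a * b * c = 1 →
        Real.sqrt (1 - a ^ 2) * Real.sqrt (1 - b ^ 2) = a * b - c := by
      intro a b c ha hb hab hid
      rw [← Real.sqrt_mul (by linarith)]
      have : (1 - a ^ 2) * (1 - b ^ 2) = (a * b - c) ^ 2 := by ring_nf; nlinarith [hid]
      rw [this, Real.sqrt_sq (by linarith)]
    have e1 : Real.sin β * Real.sin γ = Y * Z - X := by
      rw [hsβ, hsγ]; exact sqprod Y Z X hY2 hZ2 h1 (by linarith [h])
    have e2 : Real.sin α * Real.sin γ = X * Z - Y := by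
      rw [hsα, hsγ]; exact sqprod X Z Y hX2 hZ2 h2 (by linear_combination h)
    have e3 : Real.sin α * Real.sin β = X * Y - Z := by
      rw [hsα, hsβ]; exact sqprod X Y Z hX2 hY2 h3 (by linear_combination h)
    have hcβγ : Real.cos (β + γ) = Real.cos α := by
      rw [Real.cos_add, hcβ, hcγ, hcα, e1]; ring
    rcases cos_eq_cases_aux hαmem (by linarith [hβmem.1, hγmem.1])
        (by linarith [hβmem.2, hγmem.2]) hcβγ with hcase | hcase
    · -- bad case: β + γ = α; derive contradiction via Z = cos(α+β)
      exfalso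
      have hcαβ : Real.cos (α + β) = Real.cos γ := by
        rw [Real.cos_add, hcα, hcβ, hcγ, e3]; ring
      rcases cos_eq_cases_aux hγmem (by linarith [hαmem.1, hβmem.1])
          (by linarith [hαmem.2, hβmem.2]) hcαβ with hc2 | hc2
      · linarith [hβmem.1]
      · linarith [hαmem.2]
    · exact ⟨α, β, γ, hαmem, hβmem, hγmem, by linarith, hcα.symm, hcβ.symm, hcγ.symm⟩
  · rintro ⟨θ₁, θ₂, θ₃, h1, h2, h3, hsum, hX, hY, hZ⟩
    have hs1 : 0 < Real.sin θ₁ := Real.sin_pos_of_pos_of_lt_pi h1.1 h1.2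
    have hs2 : 0 < Real.sin θ₂ := Real.sin_pos_of_pos_of_lt_pi h2.1 h2.2
    have hs3 : 0 < Real.sin θ₃ := Real.sin_pos_of_pos_of_lt_pi h3.1 h3.2
    have hc3 : Real.cos θ₃ = Real.cos θ₁ * Real.cos θ₂ - Real.sin θ₁ * Real.sin θ₂ := by
      have : θ₃ = 2 * Real.pi - (θ₁ + θ₂) := by linarith
      rw [this, Real.cos_sub, Real.cos_add]; simp
    have hc1 : Real.cos θ₁ = Real.cos θ₂ * Real.cos θ₃ - Real.sin θ₂ * Real.sin θ₃ := by
      have : θ₁ = 2 * Real.pi - (θ₂ + θ₃) := by linarith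
      rw [this, Real.cos_sub, Real.cos_add]; simp
    have hc2 : Real.cos θ₂ = Real.cos θ₁ * Real.cos θ₃ - Real.sin θ₁ * Real.sin θ₃ := by
      have : θ₂ = 2 * Real.pi - (θ₁ + θ₃) := by linarith
      rw [this, Real.cos_sub, Real.cos_add]; simp
    have p1 := Real.sin_sq_add_cos_sq θ₁
    have p2 := Real.sin_sq_add_cos_sq θ₂
    refine ⟨?_, ?_, ?_, ?_⟩
    · rw [hX, hY, hZ, hc3]
      linear_combination Real.sin θ₂ ^ 2 * p1 + (1 - Real.cos θ₁ ^ 2) * p2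
    · rw [hX, hY, hZ, hc1]; linarith [mul_pos hs2 hs3]
    · rw [hX, hY, hZ, hc2]; linarith [mul_pos hs1 hs3]
    · rw [hX, hY, hZ, hc3]; linarith [mul_pos hs1 hs2]
end

section
/- Let a, b, c be real numbers. Then there exist angles θ₁, θ₂, θ₃ in the open interval (0, π) with θ₁ + θ₂ + θ₃ = 2π such that a = sin θ₁, b = sin θ₂ and c = sin θ₃ if and only if a > 0, b > 0, c > 0 and a⁴ + b⁴ + c⁴ − 2a²b² − 2a²c² − 2b²c² + 4a²b²c² = 0. -/
/-!
If `θ₁ + θ₂ + θ₃ = 2π` then `sin θ₃ = -sin (θ₁ + θ₂)`, and the quartic vanishes identically at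
`(sin x, sin y, ± sin (x + y))`. Conversely, `A = arccos ((b² + c² - a²) / (2bc))` and
`B = arccos ((a² + c² - b²) / (2ac))` are two angles of the triangle with sides `a, b, c`; the
quartic relation says exactly that its circumdiameter is `1`, i.e. `sin A = a` and `sin B = b`, and
then `sin (A + B) = c` holds for any positive `a, b, c`. The angles `π - A`, `π - B`, `A + B` work.
-/

open Real

def sineQuartic (a b c : ℝ) : ℝ :=
  a ^ 4 + b ^ 4 + c ^ 4 - 2 * a ^ 2 * b ^ 2 - 2 * a ^ 2 * c ^ 2 - 2 * b ^ 2 * c ^ 2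
    + 4 * a ^ 2 * b ^ 2 * c ^ 2

theorem sineQuartic_neg_right (a b c : ℝ) : sineQuartic a b (-c) = sineQuartic a b c := by
  unfold sineQuartic; ring

theorem sineQuartic_swap (a b c : ℝ) : sineQuartic b a c = sineQuartic a b c := by
  unfold sineQuartic; ring

theorem sineQuartic_sin_sin_sin_add (x y : ℝ) : sineQuartic (sin x) (sin y) (sin (x + y)) = 0 := by
  have hx := sin_sq_add_cos_sq x
  have hy := sin_sq_add_cos_sq y
  rw [sineQuartic, sin_add]
  set s := sin x
  set t := sin y
  set c := cos x
  set d := cos y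
  linear_combination (-t ^ 4 + c ^ 2 * t ^ 4 + 4 * s * c * t ^ 3 * d - 2 * s ^ 2 * t ^ 2
      + 6 * s ^ 2 * t ^ 2 * d ^ 2 + 3 * s ^ 2 * t ^ 4) * hx
    + (4 * s ^ 2 * t ^ 2 + 4 * s ^ 3 * c * t * d - s ^ 4 + s ^ 4 * d ^ 2 - 3 * s ^ 4 * t ^ 2) * hy

theorem lawOfCosines_sq_add_sq {a b c : ℝ} (hb : b ≠ 0) (hc : c ≠ 0) (h : sineQuartic a b c = 0) :
    ((b ^ 2 + c ^ 2 - a ^ 2) / (2 * b * c)) ^ 2 + a ^ 2 = 1 := by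
  unfold sineQuartic at h
  field_simp
  linear_combination h

theorem exists_angle_of_sq_add_sq {x s : ℝ} (hs : 0 < s) (h : x ^ 2 + s ^ 2 = 1) :
    ∃ A ∈ Set.Ioo 0 π, cos A = x ∧ sin A = s := by
  have hx : -1 < x ∧ x < 1 := abs_lt.mp ((sq_lt_one_iff_abs_lt_one x).mp (by nlinarith))
  refine ⟨arccos x, ⟨arccos_pos.mpr hx.2, arccos_lt_pi.mpr hx.1⟩,
    cos_arccos hx.1.le hx.2.le, ?_⟩
  rw [sin_arccos, show 1 - x ^ 2 = s ^ 2 by linarith, sqrt_sq hs.le]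

theorem lt_pi_of_sin_pos {t : ℝ} (ht : t < 2 * π) (hsin : 0 < sin t) : t < π := by
  by_contra! hπ
  have : 0 ≤ sin (t - π) := sin_nonneg_of_nonneg_of_le_pi (by linarith) (by linarith)
  rw [sin_sub_pi] at this
  linarith

theorem sin_add_of_lawOfCosines {A B a b c : ℝ} (ha : a ≠ 0) (hb : b ≠ 0) (hc : c ≠ 0)
    (hcA : cos A = (b ^ 2 + c ^ 2 - a ^ 2) / (2 * b * c)) (hsA : sin A = a)
    (hcB : cos B = (a ^ 2 + c ^ 2 - b ^ 2) / (2 * a * c)) (hsB : sin B = b) :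
    sin (A + B) = c := by
  rw [sin_add, hcA, hsA, hcB, hsB]
  field_simp
  ring

/-- Real numbers `a, b, c` are the sines of angles
`θ₁, θ₂, θ₃ ∈ (0, π)` with `θ₁ + θ₂ + θ₃ = 2π` iff `a, b, c > 0` and
`a⁴ + b⁴ + c⁴ − 2a²b² − 2a²c² − 2b²c² + 4a²b²c² = 0`. -/
theorem stmt_18 (a b c : ℝ) :
    (∃ θ₁ θ₂ θ₃ : ℝ, θ₁ ∈ Set.Ioo 0 Real.pi ∧ θ₂ ∈ Set.Ioo 0 Real.pi
        ∧ θ₃ ∈ Set.Ioo 0 Real.pi ∧ θ₁ + θ₂ + θ₃ = 2 * Real.pi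
        ∧ a = Real.sin θ₁ ∧ b = Real.sin θ₂ ∧ c = Real.sin θ₃) ↔
      (0 < a ∧ 0 < b ∧ 0 < c
        ∧ a ^ 4 + b ^ 4 + c ^ 4 - 2 * a ^ 2 * b ^ 2 - 2 * a ^ 2 * c ^ 2
            - 2 * b ^ 2 * c ^ 2 + 4 * a ^ 2 * b ^ 2 * c ^ 2 = 0) := by
  change _ ↔ 0 < a ∧ 0 < b ∧ 0 < c ∧ sineQuartic a b c = 0
  constructor
  · rintro ⟨θ₁, θ₂, θ₃, h₁, h₂, h₃, hsum, rfl, rfl, rfl⟩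
    have hθ₃ : sin θ₃ = -sin (θ₁ + θ₂) := by
      rw [show θ₃ = -(θ₁ + θ₂) + 2 * π by linarith, sin_add_two_pi, sin_neg]
    refine ⟨sin_pos_of_pos_of_lt_pi h₁.1 h₁.2, sin_pos_of_pos_of_lt_pi h₂.1 h₂.2,
      sin_pos_of_pos_of_lt_pi h₃.1 h₃.2, ?_⟩
    rw [hθ₃, sineQuartic_neg_right, sineQuartic_sin_sin_sin_add]
  · rintro ⟨ha, hb, hc, hP⟩
    obtain ⟨A, hA, hcA, hsA⟩ :=
      exists_angle_of_sq_add_sq ha (lawOfCosines_sq_add_sq hb.ne' hc.ne' hP)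
    obtain ⟨B, hB, hcB, hsB⟩ := exists_angle_of_sq_add_sq hb
      (lawOfCosines_sq_add_sq ha.ne' hc.ne' ((sineQuartic_swap a b c).trans hP))
    have hsAB : sin (A + B) = c := sin_add_of_lawOfCosines ha.ne' hb.ne' hc.ne' hcA hsA hcB hsB
    have hAB : A + B < π := lt_pi_of_sin_pos (by linarith [hA.2, hB.2]) (hsAB ▸ hc)
    refine ⟨π - A, π - B, A + B, ⟨by linarith [hA.2], by linarith [hA.1]⟩,
      ⟨by linarith [hB.2], by linarith [hB.1]⟩, ⟨by linarith [hA.1, hB.1], hAB⟩, by ring,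
      by rw [sin_pi_sub, hsA], by rw [sin_pi_sub, hsB], hsAB.symm⟩
end
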